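/- arXiv:2405.09736 — 8 statements merged into one kernel-verified Lean document; each statement's English description precedes it below -/
import Mathlib

section
/- Let n ∈ ℤ∖{0}. Every element of the Baumslag–Solitar group BS(1,n) can be written in the form t^u·a^w·t^{−v} for suitable u,v ∈ ℤ≥0 and w ∈ ℤ; in particular, every element of BS(1,n) is conjugate in BS(1,n) to an element of the form t^u·a^v with u,v ∈ ℤ. The same two statements hold in H(n,r,s) for any integers r,s > 0 with n^r ≡ 1 (mod s). -/
/-- The Baumslag–Solitar relations for `BS(m,n)`: one relation `t⁻¹ aᵐ t a⁻ⁿ`. -/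
def BSrels (m n : ℤ) : Set (FreeGroup Bool) :=
  {(FreeGroup.of true)⁻¹ * (FreeGroup.of false) ^ m * FreeGroup.of true *
    (FreeGroup.of false) ^ (-n)}

/-- The Baumslag–Solitar group `BS(m,n) = ⟨a, t ∣ t⁻¹ aᵐ t = aⁿ⟩`. -/
def BS (m n : ℤ) : Type := PresentedGroup (BSrels m n)

instance (m n : ℤ) : Group (BS m n) :=
  inferInstanceAs (Group (PresentedGroup (BSrels m n)))

/-- The generator `a` of `BS(m,n)`. -/
def BSa (m n : ℤ) : BS m n := PresentedGroup.of false

/-- The generator `t` of `BS(m,n)`. -/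
def BSt (m n : ℤ) : BS m n := PresentedGroup.of true

/-- The relations of `H(n,r,s)`: `t⁻¹ a t a⁻ⁿ`, `tʳ`, `aˢ`. -/
def Hrels (n r s : ℤ) : Set (FreeGroup Bool) :=
  {(FreeGroup.of true)⁻¹ * FreeGroup.of false * FreeGroup.of true * (FreeGroup.of false) ^ (-n),
   (FreeGroup.of true) ^ r, (FreeGroup.of false) ^ s}

/-- The group `H(n,r,s) = ⟨a, t ∣ t⁻¹ a t = aⁿ, tʳ = 1, aˢ = 1⟩`. -/
def Hgrp (n r s : ℤ) : Type := PresentedGroup (Hrels n r s)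

instance (n r s : ℤ) : Group (Hgrp n r s) :=
  inferInstanceAs (Group (PresentedGroup (Hrels n r s)))

/-- The generator `a` of `H(n,r,s)`. -/
def Ha (n r s : ℤ) : Hgrp n r s := PresentedGroup.of false

/-- The generator `t` of `H(n,r,s)`. -/
def Ht (n r s : ℤ) : Hgrp n r s := PresentedGroup.of true

/-- A class of groups: a predicate on (Type-0) groups. -/
def GroupClass : Type 1 := ∀ (G : Type) [Group G], Prop

/-- A class of groups consists only of periodic (torsion) groups. -/
def PeriodicClass (C : GroupClass) : Prop :=
  ∀ (G : Type) [Group G], C G → ∀ g : G, IsOfFinOrder g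

/-- `C` is a root class: closed under isomorphism, contains a non-trivial group, closed under
subgroups, extensions and unrestricted direct products `∏_{y ∈ Y} X` with `X, Y ∈ C`. -/
structure IsRootClass (C : GroupClass) : Prop where
  iso_closed : ∀ (G H : Type) [Group G] [Group H], (G ≃* H) → C G → C H
  has_nontrivial : ∃ (G : Type) (_ : Group G), C G ∧ Nontrivial G
  subgroup_closed : ∀ (G : Type) [Group G] (H : Subgroup G), C G → C H
  extension_closed : ∀ (G : Type) [Group G] (N : Subgroup G) [N.Normal],
    C N → C (G ⧸ N) → C G
  pi_closed : ∀ (X Y : Type) [Group X] [Group Y], C X → C Y → C (Y → X)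

/-- `𝔓(C)`: the set of primes dividing the order of some element of some group in `C`. -/
def PrimesOf (C : GroupClass) : Set ℕ :=
  {p | p.Prime ∧ ∃ (G : Type) (_ : Group G), C G ∧ ∃ g : G, p ∣ orderOf g}

/-- A natural number is a `P`-number: all its prime divisors lie in `P`. -/
def IsPNat (P : Set ℕ) (k : ℕ) : Prop := ∀ p : ℕ, p.Prime → p ∣ k → p ∈ P

/-- An integer is a `P`-number: all its prime divisors lie in `P`. -/
def IsPInt (P : Set ℕ) (k : ℤ) : Prop := ∀ p : ℕ, p.Prime → (p : ℤ) ∣ k → p ∈ P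

/-- The class `𝓕_P` of finite groups whose order is a `P`-number. -/
def FClass (P : Set ℕ) (G : Type) [Group G] : Prop :=
  Finite G ∧ IsPNat P (Nat.card G)

/-- The class `𝓕𝓢_P` of finite solvable groups whose order is a `P`-number. -/
def FSClass (P : Set ℕ) (G : Type) [Group G] : Prop :=
  Finite G ∧ IsSolvable G ∧ IsPNat P (Nat.card G)

/-- `X` is conjugacy `C`-separable. -/
def ConjSep (C : GroupClass) (X : Type) [Group X] : Prop :=
  ∀ x y : X, ¬IsConj x y →
    ∃ (G : Type) (_ : Group G), C G ∧
      ∃ σ : X →* G, Function.Surjective σ ∧ ¬IsConj (σ x) (σ y)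

/-- `X` is residually a `C`-group. -/
def ResiduallyIn (C : GroupClass) (X : Type) [Group X] : Prop :=
  ∀ x y : X, x ≠ y →
    ∃ (G : Type) (_ : Group G), C G ∧
      ∃ σ : X →* G, Function.Surjective σ ∧ σ x ≠ σ y

/-- `X` is residually finite. -/
def ResiduallyFinite (X : Type) [Group X] : Prop :=
  ∀ x y : X, x ≠ y →
    ∃ (G : Type) (_ : Group G), Finite G ∧
      ∃ σ : X →* G, Function.Surjective σ ∧ σ x ≠ σ y

/-- `X` is conjugacy (finite) separable. -/
def ConjugacySeparable (X : Type) [Group X] : Prop :=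
  ∀ x y : X, ¬IsConj x y →
    ∃ (G : Type) (_ : Group G), Finite G ∧
      ∃ σ : X →* G, Function.Surjective σ ∧ ¬IsConj (σ x) (σ y)

/-- `Ξ(n,P)`: positive `P`-numbers `s` such that `n ^ r ≡ 1 (mod s)` for some positive
`P`-number `r`. -/
def Xi (n : ℤ) (P : Set ℕ) : Set ℤ :=
  {s | 0 < s ∧ IsPInt P s ∧ ∃ r : ℤ, 0 < r ∧ IsPInt P r ∧ n ^ r.toNat ≡ 1 [ZMOD s]}

/-- `Ω(n,P)`: pairs `(r,s)` of positive `P`-numbers with `n ^ r ≡ 1 (mod s)`. -/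
def OmegaP (n : ℤ) (P : Set ℕ) : Set (ℤ × ℤ) :=
  {rs | 0 < rs.1 ∧ 0 < rs.2 ∧ IsPInt P rs.1 ∧ IsPInt P rs.2 ∧
    n ^ rs.1.toNat ≡ 1 [ZMOD rs.2]}

/-!
The relation `t⁻¹ a t = aⁿ` gives `a ^ w * t ^ k = t ^ k * a ^ (n ^ k * w)` for `k ≥ 0`, so
powers of `a` can be pushed to the right past nonnegative powers of `t`, and to the left past
nonpositive ones. Hence the products `t ^ u * a ^ w * t ^ (-v)` with `u, v ≥ 0` are closed under
multiplication and inversion; they form a subgroup containing `a` and `t`, which is everything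
when `a` and `t` generate. Conjugating such a product by `t ^ v` gives `t ^ (u - v) * a ^ w`.
`H(n,r,s)` is also generated by `a` and `t` with `t⁻¹ a t = aⁿ`, so the same argument applies.
-/

section NormalForm

variable {G : Type*} [Group G] {a t : G} {n : ℤ}

theorem inv_mul_zpow_mul_eq_of_inv_mul_mul (rel : t⁻¹ * a * t = a ^ n) (m : ℤ) :
    t⁻¹ * a ^ m * t = a ^ (n * m) := by
  simpa [rel, zpow_mul] using (conj_zpow (a := t⁻¹) (b := a) (i := m)).symm

theorem inv_mul_zpow_mul_pow_eq_of_inv_mul_mul (rel : t⁻¹ * a * t = a ^ n) (k : ℕ) (m : ℤ) :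
    (t ^ k)⁻¹ * a ^ m * t ^ k = a ^ (n ^ k * m) := by
  induction k with
  | zero => simp
  | succ k ih =>
    calc (t ^ (k + 1))⁻¹ * a ^ m * t ^ (k + 1)
        = t⁻¹ * ((t ^ k)⁻¹ * a ^ m * t ^ k) * t := by group
      _ = a ^ (n ^ (k + 1) * m) := by
          rw [ih, inv_mul_zpow_mul_eq_of_inv_mul_mul rel, pow_succ, mul_comm _ n, mul_assoc]

theorem zpow_mul_zpow_natCast_eq_of_inv_mul_mul (rel : t⁻¹ * a * t = a ^ n) (k : ℕ) (m : ℤ) :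
    a ^ m * t ^ (k : ℤ) = t ^ (k : ℤ) * a ^ (n ^ k * m) := by
  rw [← inv_mul_zpow_mul_pow_eq_of_inv_mul_mul rel, zpow_natCast]
  group

theorem zpow_neg_natCast_mul_zpow_eq_of_inv_mul_mul (rel : t⁻¹ * a * t = a ^ n) (k : ℕ)
    (m : ℤ) : t ^ (-(k : ℤ)) * a ^ m = a ^ (n ^ k * m) * t ^ (-(k : ℤ)) := by
  rw [← inv_mul_zpow_mul_pow_eq_of_inv_mul_mul rel, zpow_neg, zpow_natCast]
  group

variable (a t) in
def normalFormSubgroup (rel : t⁻¹ * a * t = a ^ n) : Subgroup G where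
  carrier := {g | ∃ (u v : ℕ) (w : ℤ), g = t ^ (u : ℤ) * a ^ w * t ^ (-(v : ℤ))}
  one_mem' := ⟨0, 0, 0, by simp⟩
  inv_mem' := by
    rintro _ ⟨u, v, w, rfl⟩
    exact ⟨v, u, -w, by group⟩
  mul_mem' := by
    rintro _ _ ⟨u, v, w, rfl⟩ ⟨u', v', w', rfl⟩
    rcases le_total v u' with h | h
    · obtain ⟨d, rfl⟩ := Nat.exists_eq_add_of_le h
      refine ⟨u + d, v', n ^ d * w + w', ?_⟩
      calc _ = t ^ (u : ℤ) * (a ^ w * t ^ (d : ℤ)) * a ^ w' * t ^ (-(v' : ℤ)) := by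
            push_cast
            group
        _ = _ := by
            rw [zpow_mul_zpow_natCast_eq_of_inv_mul_mul rel]
            push_cast
            group
    · obtain ⟨e, rfl⟩ := Nat.exists_eq_add_of_le h
      refine ⟨u, e + v', w + n ^ e * w', ?_⟩
      calc _ = t ^ (u : ℤ) * a ^ w * (t ^ (-(e : ℤ)) * a ^ w') * t ^ (-(v' : ℤ)) := by
            push_cast
            group
        _ = _ := by
            rw [zpow_neg_natCast_mul_zpow_eq_of_inv_mul_mul rel]
            push_cast
            group

theorem normalFormSubgroup_eq_top (rel : t⁻¹ * a * t = a ^ n)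
    (hgen : Subgroup.closure {a, t} = ⊤) : normalFormSubgroup a t rel = ⊤ := by
  rw [eq_top_iff, ← hgen, Subgroup.closure_le, Set.insert_subset_iff, Set.singleton_subset_iff]
  exact ⟨⟨0, 0, 1, by simp⟩, ⟨1, 0, 0, by simp⟩⟩

theorem exists_eq_zpow_mul_zpow_mul_zpow_neg (rel : t⁻¹ * a * t = a ^ n)
    (hgen : Subgroup.closure {a, t} = ⊤) (g : G) :
    ∃ (u v : ℕ) (w : ℤ), g = t ^ (u : ℤ) * a ^ w * t ^ (-(v : ℤ)) := by
  exact (Subgroup.eq_top_iff' _).1 (normalFormSubgroup_eq_top rel hgen) g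

theorem exists_isConj_zpow_mul_zpow (rel : t⁻¹ * a * t = a ^ n)
    (hgen : Subgroup.closure {a, t} = ⊤) (g : G) : ∃ u v : ℤ, IsConj g (t ^ u * a ^ v) := by
  obtain ⟨u, v, w, rfl⟩ := exists_eq_zpow_mul_zpow_mul_zpow_neg rel hgen g
  exact ⟨u - v, w, isConj_iff.2 ⟨t ^ (-(v : ℤ)), by group⟩⟩

end NormalForm

theorem PresentedGroup.closure_of_false_of_true (rels : Set (FreeGroup Bool)) :
    Subgroup.closure {(of false : PresentedGroup rels), of true} = ⊤ := by
  rw [← closure_range_of]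
  congr
  ext
  simp

theorem BSt_inv_mul_BSa_zpow_mul_BSt (m n : ℤ) :
    (BSt m n)⁻¹ * BSa m n ^ m * BSt m n = BSa m n ^ n := by
  have h := PresentedGroup.one_of_mem (rels := BSrels m n) rfl
  simp only [map_mul, map_inv, map_zpow, zpow_neg, mul_inv_eq_one] at h
  exact h

theorem Ht_inv_mul_Ha_mul_Ht (n r s : ℤ) :
    (Ht n r s)⁻¹ * Ha n r s * Ht n r s = Ha n r s ^ n := by
  have h := PresentedGroup.one_of_mem (rels := Hrels n r s) (Or.inl rfl)
  simp only [map_mul, map_inv, map_zpow, zpow_neg, mul_inv_eq_one] at h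
  exact h

theorem stmt0_general (n : ℤ) :
    ((∀ g : BS 1 n, ∃ (u v : ℕ) (w : ℤ),
        g = BSt 1 n ^ (u : ℤ) * BSa 1 n ^ w * BSt 1 n ^ (-(v : ℤ))) ∧
      (∀ g : BS 1 n, ∃ u v : ℤ, IsConj g (BSt 1 n ^ u * BSa 1 n ^ v))) ∧
    (∀ r s : ℤ, 0 < r → 0 < s → n ^ r.toNat ≡ 1 [ZMOD s] →
      (∀ g : Hgrp n r s, ∃ (u v : ℕ) (w : ℤ),
        g = Ht n r s ^ (u : ℤ) * Ha n r s ^ w * Ht n r s ^ (-(v : ℤ))) ∧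
      (∀ g : Hgrp n r s, ∃ u v : ℤ, IsConj g (Ht n r s ^ u * Ha n r s ^ v))) := by
  have relBS : (BSt 1 n)⁻¹ * BSa 1 n * BSt 1 n = BSa 1 n ^ n := by
    simpa using BSt_inv_mul_BSa_zpow_mul_BSt 1 n
  have hBS := PresentedGroup.closure_of_false_of_true (BSrels 1 n)
  refine ⟨⟨exists_eq_zpow_mul_zpow_mul_zpow_neg relBS hBS,
    exists_isConj_zpow_mul_zpow relBS hBS⟩, fun r s _ _ _ => ?_⟩
  have hH := PresentedGroup.closure_of_false_of_true (Hrels n r s)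
  exact ⟨exists_eq_zpow_mul_zpow_mul_zpow_neg (Ht_inv_mul_Ha_mul_Ht n r s) hH,
    exists_isConj_zpow_mul_zpow (Ht_inv_mul_Ha_mul_Ht n r s) hH⟩

/-- normal forms and conjugacy representatives in `BS(1,n)` and `H(n,r,s)`. -/
theorem stmt0 (n : ℤ) (hn : n ≠ 0) :
    ((∀ g : BS 1 n, ∃ (u v : ℕ) (w : ℤ),
        g = BSt 1 n ^ (u : ℤ) * BSa 1 n ^ w * BSt 1 n ^ (-(v : ℤ))) ∧
      (∀ g : BS 1 n, ∃ u v : ℤ, IsConj g (BSt 1 n ^ u * BSa 1 n ^ v))) ∧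
    (∀ r s : ℤ, 0 < r → 0 < s → n ^ r.toNat ≡ 1 [ZMOD s] →
      (∀ g : Hgrp n r s, ∃ (u v : ℕ) (w : ℤ),
        g = Ht n r s ^ (u : ℤ) * Ha n r s ^ w * Ht n r s ^ (-(v : ℤ))) ∧
      (∀ g : Hgrp n r s, ∃ u v : ℤ, IsConj g (Ht n r s ^ u * Ha n r s ^ v))) :=
  stmt0_general n
end

section
/- Let n ∈ ℤ∖{0}, u ∈ ℤ≥0 and v,w ∈ ℤ. The elements t^u·a^v and t^u·a^w are conjugate in BS(1,n) if and only if there exist x,y ∈ ℤ≥0 such that (n^u − 1) divides v·n^x − w·n^y. -/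
section basic
variable (n : ℤ)

local notation "a" => BSa 1 n
local notation "t" => BSt 1 n

theorem BS_rel : t⁻¹ * a * t = a ^ n := by
  have h : PresentedGroup.mk (BSrels 1 n)
      ((FreeGroup.of true)⁻¹ * (FreeGroup.of false) ^ (1:ℤ) * FreeGroup.of true *
        (FreeGroup.of false) ^ (-n)) = 1 := by
    apply (QuotientGroup.eq_one_iff _).2
    exact Subgroup.subset_normalClosure rfl
  simp only [map_mul, map_inv, map_zpow, zpow_one] at h
  have ht : PresentedGroup.mk (BSrels 1 n) (FreeGroup.of true) = t := rfl
  have ha : PresentedGroup.mk (BSrels 1 n) (FreeGroup.of false) = a := rfl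
  rw [ht, ha] at h
  have : t⁻¹ * a * t = (a ^ (-n))⁻¹ := mul_eq_one_iff_eq_inv.mp h
  rw [this]
  simp

theorem BS_conj_zpow (v : ℤ) : t⁻¹ * a ^ v * t = a ^ (v * n) := by
  have h : t⁻¹ * a ^ v * (t⁻¹)⁻¹ = (t⁻¹ * a * (t⁻¹)⁻¹) ^ v := (conj_zpow).symm
  rw [inv_inv] at h
  rw [h, BS_rel, ← zpow_mul, mul_comm]

theorem BS_conj_pow (k : ℕ) (v : ℤ) : (t ^ k)⁻¹ * a ^ v * t ^ k = a ^ (v * n ^ k) := by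
  induction k generalizing v with
  | zero => simp
  | succ k ih =>
      rw [pow_succ, mul_inv_rev]
      have : t⁻¹ * (t ^ k)⁻¹ * a ^ v * (t ^ k * t)
          = t⁻¹ * ((t ^ k)⁻¹ * a ^ v * t ^ k) * t := by group
      rw [this, ih, BS_conj_zpow]
      congr 1
      ring

theorem BS_R1 (k : ℕ) (v : ℤ) : a ^ v * t ^ k = t ^ k * a ^ (v * n ^ k) := by
  rw [← BS_conj_pow n k v]; group

theorem BS_R2 (k : ℕ) (v : ℤ) : (t ^ k)⁻¹ * a ^ v = a ^ (v * n ^ k) * (t ^ k)⁻¹ := by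
  rw [← BS_conj_pow n k v]; group

theorem BS_normal_form (g : BS 1 n) :
    ∃ (q p : ℕ) (m : ℤ), g = t ^ q * a ^ m * (t ^ p)⁻¹ := by
  let H : Subgroup (BS 1 n) :=
    { carrier := {g | ∃ (q p : ℕ) (m : ℤ), g = t ^ q * a ^ m * (t ^ p)⁻¹}
      one_mem' := ⟨0, 0, 0, by simp⟩
      mul_mem' := by
        rintro x y ⟨q, p, m, rfl⟩ ⟨q', p', m', rfl⟩
        rcases le_or_gt p q' with h | h
        · obtain ⟨k, rfl⟩ : ∃ k, q' = p + k := ⟨q' - p, by omega⟩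
          refine ⟨q + k, p', m * n ^ k + m', ?_⟩
          calc t ^ q * a ^ m * (t ^ p)⁻¹ * (t ^ (p + k) * a ^ m' * (t ^ p')⁻¹)
              = t ^ q * (a ^ m * t ^ k) * (a ^ m' * (t ^ p')⁻¹) := by
                rw [pow_add]; group
            _ = t ^ q * (t ^ k * a ^ (m * n ^ k)) * (a ^ m' * (t ^ p')⁻¹) := by
                rw [BS_R1]
            _ = t ^ (q + k) * a ^ (m * n ^ k + m') * (t ^ p')⁻¹ := by
                rw [pow_add, zpow_add]; group
        · obtain ⟨r, rfl⟩ : ∃ r, p = q' + r := ⟨p - q', by omega⟩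
          refine ⟨q, p' + r, m + m' * n ^ r, ?_⟩
          calc t ^ q * a ^ m * (t ^ (q' + r))⁻¹ * (t ^ q' * a ^ m' * (t ^ p')⁻¹)
              = t ^ q * a ^ m * ((t ^ r)⁻¹ * a ^ m') * (t ^ p')⁻¹ := by
                rw [pow_add]; group
            _ = t ^ q * a ^ m * (a ^ (m' * n ^ r) * (t ^ r)⁻¹) * (t ^ p')⁻¹ := by
                rw [BS_R2]
            _ = t ^ q * a ^ (m + m' * n ^ r) * (t ^ (p' + r))⁻¹ := by
                rw [pow_add, zpow_add]; group
      inv_mem' := by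
        rintro x ⟨q, p, m, rfl⟩
        exact ⟨p, q, -m, by group⟩ }
  refine PresentedGroup.generated_by _ H (fun j => ?_) g
  cases j
  · exact ⟨0, 0, 1, by show BSa 1 n = _; simp⟩
  · exact ⟨1, 0, 0, by show BSt 1 n = _; simp⟩

end basic

section rep
variable (n : ℤ) (hn : n ≠ 0)

/-- The permutation `x ↦ x / n` of `ℚ`. -/
def tPerm : Equiv.Perm ℚ where
  toFun x := x * (n : ℚ)⁻¹
  invFun x := x * (n : ℚ)
  left_inv x := by
    have : (n : ℚ) ≠ 0 := Int.cast_ne_zero.mpr hn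
    field_simp
  right_inv x := by
    have : (n : ℚ) ≠ 0 := Int.cast_ne_zero.mpr hn
    field_simp

theorem BS_rels_check : ∀ r ∈ BSrels 1 n,
    FreeGroup.lift (fun b => cond b (tPerm n hn) (Equiv.addRight (1 : ℚ))) r = 1 := by
  intro r hr
  rw [hr]
  simp only [map_mul, map_inv, map_zpow, FreeGroup.lift_apply_of, cond_true, cond_false]
  ext x
  have hn' : (n : ℚ) ≠ 0 := Int.cast_ne_zero.mpr hn
  simp only [Equiv.Perm.mul_apply, Equiv.zsmul_addRight, zpow_one, Equiv.coe_addRight,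
    smul_eq_mul, Equiv.Perm.one_apply, Equiv.Perm.inv_def]
  show (tPerm n hn).symm ((tPerm n hn) (x + (-n : ℤ) • (1:ℚ)) + 1) = x
  simp only [tPerm, Equiv.coe_fn_mk, Equiv.coe_fn_symm_mk, zsmul_eq_mul, Int.cast_neg]
  field_simp
  ring

end rep

theorem BSa_zpow_inj (n : ℤ) (hn : n ≠ 0) {M W : ℤ} (h : BSa 1 n ^ M = BSa 1 n ^ W) :
    M = W := by
  let σ : PresentedGroup (BSrels 1 n) →* Equiv.Perm ℚ :=
    PresentedGroup.toGroup (BS_rels_check n hn)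
  have h2 : σ (BSa 1 n) ^ M = σ (BSa 1 n) ^ W := 
    (map_zpow σ (BSa 1 n) M).symm.trans ((congrArg σ h).trans (map_zpow σ (BSa 1 n) W))
  have ha : σ (BSa 1 n) = Equiv.addRight (1 : ℚ) :=
    PresentedGroup.toGroup.of (BS_rels_check n hn)
  rw [ha, Equiv.zsmul_addRight, Equiv.zsmul_addRight] at h2
  have h3 := congrArg (fun e : Equiv.Perm ℚ => e 0) h2
  simp only [Equiv.coe_addRight, zsmul_eq_mul, mul_one, zero_add] at h3
  exact_mod_cast h3

/-- conjugacy criterion for `tᵘaᵛ` and `tᵘaʷ` in `BS(1,n)`. -/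
theorem stmt1 (n : ℤ) (hn : n ≠ 0) (u : ℕ) (v w : ℤ) :
    IsConj (BSt 1 n ^ (u : ℤ) * BSa 1 n ^ v) (BSt 1 n ^ (u : ℤ) * BSa 1 n ^ w) ↔
      ∃ x y : ℕ, (n ^ u - 1) ∣ (v * n ^ x - w * n ^ y) := by
  set a := BSa 1 n
  set t := BSt 1 n
  rw [zpow_natCast]
  constructor
  · rintro h
    obtain ⟨g, hg⟩ := isConj_iff.mp h
    obtain ⟨q, p, m, rfl⟩ := BS_normal_form n g
    refine ⟨p, q, -m, ?_⟩
    have key : t ^ u * (t ^ q * a ^ (m * n ^ u + (v * n ^ p + -m)) * (t ^ q)⁻¹)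
        = t ^ u * a ^ w := by
      rw [← hg]
      symm
      calc t ^ q * a ^ m * (t ^ p)⁻¹ * (t ^ u * a ^ v) * (t ^ q * a ^ m * (t ^ p)⁻¹)⁻¹
          = t ^ q * (a ^ m * t ^ u) * ((t ^ p)⁻¹ * a ^ v * t ^ p) * a ^ (-m) * (t ^ q)⁻¹ := by
            group
        _ = t ^ q * (t ^ u * a ^ (m * n ^ u)) * a ^ (v * n ^ p) * a ^ (-m) * (t ^ q)⁻¹ := by
            rw [BS_R1, BS_conj_pow]
        _ = t ^ u * (t ^ q * a ^ (m * n ^ u + (v * n ^ p + -m)) * (t ^ q)⁻¹) := by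
            rw [zpow_add, zpow_add]; group
    have key2 := mul_left_cancel key
    have e2 : a ^ (m * n ^ u + (v * n ^ p + -m)) = (t ^ q)⁻¹ * a ^ w * t ^ q := by
      rw [← key2]; group
    rw [BS_conj_pow] at e2
    have hE := BSa_zpow_inj n hn e2
    rw [← hE]
    ring
  · rintro ⟨x, y, c, hc⟩
    have h1 : IsConj (t ^ u * a ^ v) (t ^ u * a ^ (v * n ^ x)) := by
      refine isConj_iff.2 ⟨(t ^ x)⁻¹, ?_⟩
      calc (t ^ x)⁻¹ * (t ^ u * a ^ v) * ((t ^ x)⁻¹)⁻¹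
          = t ^ u * ((t ^ x)⁻¹ * a ^ v * t ^ x) := by group
        _ = t ^ u * a ^ (v * n ^ x) := by rw [BS_conj_pow]
    have h2 : IsConj (t ^ u * a ^ w) (t ^ u * a ^ (w * n ^ y)) := by
      refine isConj_iff.2 ⟨(t ^ y)⁻¹, ?_⟩
      calc (t ^ y)⁻¹ * (t ^ u * a ^ w) * ((t ^ y)⁻¹)⁻¹
          = t ^ u * ((t ^ y)⁻¹ * a ^ w * t ^ y) := by group
        _ = t ^ u * a ^ (w * n ^ y) := by rw [BS_conj_pow]
    have h3 : IsConj (t ^ u * a ^ (v * n ^ x)) (t ^ u * a ^ (w * n ^ y)) := by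
      refine isConj_iff.2 ⟨a ^ (-c), ?_⟩
      calc a ^ (-c) * (t ^ u * a ^ (v * n ^ x)) * (a ^ (-c))⁻¹
          = t ^ u * ((t ^ u)⁻¹ * a ^ (-c) * t ^ u) * a ^ (v * n ^ x) * a ^ c := by group
        _ = t ^ u * a ^ (-c * n ^ u) * a ^ (v * n ^ x) * a ^ c := by rw [BS_conj_pow]
        _ = t ^ u * a ^ (-c * n ^ u + (v * n ^ x + c)) := by rw [zpow_add, zpow_add]; group
        _ = t ^ u * a ^ (w * n ^ y) := by
            rw [show -c * n ^ u + (v * n ^ x + c) = w * n ^ y by linarith [hc]]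
    exact (h1.trans h3).trans h2.symm
end

section
/- Let n ∈ ℤ∖{0}, let r,s be positive integers with n^r ≡ 1 (mod s), let u ∈ ℤ≥0 and v,w ∈ ℤ. The elements t^u·a^v and t^u·a^w are conjugate in H(n,r,s) if and only if there exist x,y ∈ ℤ≥0 such that gcd(n^u − 1, s) divides v·n^x − w·n^y. -/
/-! ### Auxiliary material for `stmt2` -/

section StmtTwoAux

/-- The concrete finite group `ℤ/s' ⋊ ℤ/r'` (semidirect product w.r.t. multiplication by `n`),
with elements thought of as `t^x a^b`. -/
@[ext]
structure HGaux (n : ℤ) (r' s' : ℕ) : Type where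
  x : ZMod r'
  b : ZMod s'

namespace HGaux
variable {n : ℤ} {r' s' : ℕ}

def e (n : ℤ) (s' : ℕ) (x : ZMod r') : ZMod s' := (n : ZMod s') ^ x.val

theorem pow_mod [NeZero r'] (hns : (n : ZMod s') ^ r' = 1) (a : ℕ) :
    (n : ZMod s') ^ a = (n : ZMod s') ^ (a % r') := by
  conv_lhs => rw [← Nat.div_add_mod a r', pow_add, pow_mul, hns, one_pow, one_mul]

theorem e_add [NeZero r'] (hns : (n : ZMod s') ^ r' = 1) (x y : ZMod r') :
    e n s' (x + y) = e n s' x * e n s' y := by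
  rw [e, e, e, ZMod.val_add, ← pow_add, ← pow_mod hns]

theorem e_zero [NeZero r'] : e n s' (0 : ZMod r') = 1 := by
  rw [e, ZMod.val_zero, pow_zero]

theorem e_one [NeZero r'] (hns : (n : ZMod s') ^ r' = 1) :
    e n s' (1 : ZMod r') = (n : ZMod s') := by
  have h1 : (1 : ZMod r') = ((1 : ℕ) : ZMod r') := by push_cast; rfl
  rw [e, h1, ZMod.val_natCast, ← pow_mod hns, pow_one]

instance : Mul (HGaux n r' s') := ⟨fun p q => ⟨p.x + q.x, p.b * e n s' q.x + q.b⟩⟩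
instance : One (HGaux n r' s') := ⟨⟨0, 0⟩⟩
instance : Inv (HGaux n r' s') := ⟨fun p => ⟨-p.x, -p.b * e n s' (-p.x)⟩⟩

@[simp] theorem mul_x (p q : HGaux n r' s') : (p * q).x = p.x + q.x := rfl
@[simp] theorem mul_b (p q : HGaux n r' s') : (p * q).b = p.b * e n s' q.x + q.b := rfl
@[simp] theorem one_x : (1 : HGaux n r' s').x = 0 := rfl
@[simp] theorem one_b : (1 : HGaux n r' s').b = 0 := rfl
@[simp] theorem inv_x (p : HGaux n r' s') : p⁻¹.x = -p.x := rfl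
@[simp] theorem inv_b (p : HGaux n r' s') : p⁻¹.b = -p.b * e n s' (-p.x) := rfl

variable [NeZero r'] [hF : Fact ((n : ZMod s') ^ r' = 1)]

theorem e_neg_mul (x : ZMod r') : e n s' (-x) * e n s' x = 1 := by
  rw [← e_add hF.out, neg_add_cancel, e_zero]

instance : Group (HGaux n r' s') where
  mul_assoc p q t := by
    ext <;> simp [e_add hF.out] <;> ring
  one_mul p := by ext <;> simp [e_zero]
  mul_one p := by ext <;> simp [e_zero]
  inv_mul_cancel p := by
    ext <;> simp
    rw [mul_assoc, e_neg_mul]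
    ring

def T : HGaux n r' s' := ⟨1, 0⟩
def A : HGaux n r' s' := ⟨0, 1⟩

theorem A_pow (m : ℕ) : (A : HGaux n r' s') ^ m = ⟨0, (m : ZMod s')⟩ := by
  induction m with
  | zero => ext <;> simp
  | succ k ih => rw [pow_succ, ih]; ext <;> simp [A, e_zero]

theorem A_zpow (k : ℤ) : (A : HGaux n r' s') ^ k = ⟨0, (k : ZMod s')⟩ := by
  cases k with
  | ofNat m => rw [Int.ofNat_eq_coe, zpow_natCast, A_pow]; push_cast; rfl
  | negSucc m =>
      rw [zpow_negSucc, A_pow]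
      ext <;> simp [e_zero] <;> push_cast <;> ring

theorem T_pow (m : ℕ) : (T : HGaux n r' s') ^ m = ⟨(m : ZMod r'), 0⟩ := by
  induction m with
  | zero => ext <;> simp
  | succ k ih => rw [pow_succ, ih]; ext <;> simp [T]

theorem T_zpow (k : ℤ) : (T : HGaux n r' s') ^ k = ⟨(k : ZMod r'), 0⟩ := by
  cases k with
  | ofNat m => rw [Int.ofNat_eq_coe, zpow_natCast, T_pow]; push_cast; rfl
  | negSucc m =>
      rw [zpow_negSucc, T_pow]
      ext <;> simp <;> push_cast <;> ring

theorem TA (k v : ℤ) :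
    (T : HGaux n r' s') ^ k * A ^ v = ⟨(k : ZMod r'), (v : ZMod s')⟩ := by
  rw [T_zpow, A_zpow]; ext <;> simp [e_zero]

end HGaux

variable (n r s : ℤ)

theorem Hrel_eq_one' {rel : FreeGroup Bool} (h : rel ∈ Hrels n r s) :
    PresentedGroup.mk (Hrels n r s) rel = 1 :=
  (QuotientGroup.eq_one_iff rel).mpr (Subgroup.subset_normalClosure h)

theorem Ha_zpow_s : (Ha n r s) ^ s = 1 := by
  have h : (PresentedGroup.mk (Hrels n r s) (FreeGroup.of false)) ^ s = 1 := by
    rw [← map_zpow]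
    exact Hrel_eq_one' n r s (by simp [Hrels])
  exact h

theorem Ht_zpow_r : (Ht n r s) ^ r = 1 := by
  have h : (PresentedGroup.mk (Hrels n r s) (FreeGroup.of true)) ^ r = 1 := by
    rw [← map_zpow]
    exact Hrel_eq_one' n r s (by simp [Hrels])
  exact h

theorem Hconj : (Ht n r s)⁻¹ * Ha n r s * Ht n r s = (Ha n r s) ^ n := by
  have h : (PresentedGroup.mk (Hrels n r s)) ((FreeGroup.of true)⁻¹ * FreeGroup.of false *
      FreeGroup.of true * (FreeGroup.of false) ^ (-n)) = 1 :=
    Hrel_eq_one' n r s (by simp [Hrels])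
  simp only [map_mul, map_inv, map_zpow] at h
  rw [mul_eq_one_iff_eq_inv, zpow_neg, inv_inv] at h
  exact h

theorem Hconj_zpow (k : ℤ) :
    (Ht n r s)⁻¹ * (Ha n r s) ^ k * Ht n r s = (Ha n r s) ^ (n * k) := by
  have h : (Ht n r s)⁻¹ * (Ha n r s) ^ k * Ht n r s
      = ((Ht n r s)⁻¹ * Ha n r s * (Ht n r s)⁻¹⁻¹) ^ k := by
    rw [conj_zpow, inv_inv]
  rw [h, inv_inv, Hconj, ← zpow_mul]

theorem Hconj_pow (m : ℕ) (k : ℤ) :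
    (Ht n r s) ^ (-(m:ℤ)) * (Ha n r s) ^ k * (Ht n r s) ^ (m:ℤ)
      = (Ha n r s) ^ (k * n ^ m) := by
  induction m generalizing k with
  | zero => simp
  | succ j ih =>
      have h1 : (Ht n r s) ^ (-((j:ℤ)+1)) = (Ht n r s) ^ (-(j:ℤ)) * (Ht n r s)⁻¹ := by group
      have h2 : (Ht n r s) ^ ((j:ℤ)+1) = Ht n r s * (Ht n r s) ^ (j:ℤ) := by group
      push_cast
      rw [h1, h2]
      have h3 : (Ht n r s) ^ (-(j:ℤ)) * (Ht n r s)⁻¹ * Ha n r s ^ k * (Ht n r s * Ht n r s ^ (j:ℤ))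
          = (Ht n r s) ^ (-(j:ℤ)) * ((Ht n r s)⁻¹ * Ha n r s ^ k * Ht n r s) * Ht n r s ^ (j:ℤ) := by
        group
      rw [h3, Hconj_zpow, ih]
      congr 1
      ring

theorem Ha_dvd_eq {a b : ℤ} (h : s ∣ a - b) : (Ha n r s) ^ a = (Ha n r s) ^ b := by
  obtain ⟨k, hk⟩ := h
  have : a = b + s * k := by linarith
  rw [this, zpow_add, zpow_mul, Ha_zpow_s, one_zpow, mul_one]

theorem Hconj_elt (u m : ℕ) (z v : ℤ) :
    (Ha n r s ^ z * Ht n r s ^ (-(m:ℤ))) * (Ht n r s ^ (u:ℤ) * Ha n r s ^ v) *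
      (Ha n r s ^ z * Ht n r s ^ (-(m:ℤ)))⁻¹
    = Ht n r s ^ (u:ℤ) * Ha n r s ^ (v * n ^ m + z * (n ^ u - 1)) := by
  have e1 := Hconj_pow n r s m v
  have e2 := Hconj_pow n r s u z
  have hv : Ha n r s ^ v = Ht n r s ^ (m:ℤ) * Ha n r s ^ (v * n ^ m) * Ht n r s ^ (-(m:ℤ)) := by
    rw [← e1]; group
  have hz : Ha n r s ^ z * Ht n r s ^ (u:ℤ) = Ht n r s ^ (u:ℤ) * Ha n r s ^ (z * n ^ u) := by
    rw [← e2]; group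
  calc (Ha n r s ^ z * Ht n r s ^ (-(m:ℤ))) * (Ht n r s ^ (u:ℤ) * Ha n r s ^ v) *
      (Ha n r s ^ z * Ht n r s ^ (-(m:ℤ)))⁻¹
      = Ha n r s ^ z * Ht n r s ^ (u:ℤ) * Ha n r s ^ (v * n ^ m - z) := by
        rw [hv]; group
    _ = Ht n r s ^ (u:ℤ) * Ha n r s ^ (z * n ^ u) * Ha n r s ^ (v * n ^ m - z) := by rw [hz]
    _ = Ht n r s ^ (u:ℤ) * Ha n r s ^ (v * n ^ m + z * (n ^ u - 1)) := by
        rw [mul_assoc, ← zpow_add]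
        congr 1
        ring

/-- If `g ∣ n^{r'} - 1` then `n^a ≡ n^b mod g` whenever `a ≡ b mod r'`. -/
theorem pow_sub_pow_dvd_aux (n g : ℤ) (r' : ℕ) (hg : g ∣ n ^ r' - 1) :
    ∀ a b : ℕ, b ≤ a → a % r' = b % r' → g ∣ n ^ a - n ^ b := by
  intro a b hba hab
  obtain ⟨k, hk⟩ := (Nat.modEq_iff_dvd' hba).mp hab.symm
  have ha : a = b + r' * k := by omega
  have h1 : g ∣ (n ^ r') ^ k - 1 ^ k := hg.trans (sub_dvd_pow_sub_pow _ _ _)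
  have h2 : n ^ a - n ^ b = n ^ b * ((n ^ r') ^ k - 1 ^ k) := by
    rw [ha, pow_add, pow_mul]; ring
  rw [h2]
  exact Dvd.dvd.mul_left h1 _

theorem pow_sub_pow_dvd (n g : ℤ) (r' : ℕ) (hg : g ∣ n ^ r' - 1)
    (a b : ℕ) (hab : a % r' = b % r') : g ∣ n ^ a - n ^ b := by
  rcases le_total b a with h | h
  · exact pow_sub_pow_dvd_aux n g r' hg a b h hab
  · have := pow_sub_pow_dvd_aux n g r' hg b a h hab.symm
    rw [show n ^ a - n ^ b = -(n ^ b - n ^ a) by ring]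
    exact this.neg_right

end StmtTwoAux

/-- conjugacy criterion for `tᵘaᵛ` and `tᵘaʷ` in `H(n,r,s)`. -/
theorem stmt2 (n : ℤ) (hn : n ≠ 0) (r s : ℤ) (hr : 0 < r) (hs : 0 < s)
    (hmod : n ^ r.toNat ≡ 1 [ZMOD s]) (u : ℕ) (v w : ℤ) :
    IsConj (Ht n r s ^ (u : ℤ) * Ha n r s ^ v) (Ht n r s ^ (u : ℤ) * Ha n r s ^ w) ↔
      ∃ x y : ℕ, (Int.gcd (n ^ u - 1) s : ℤ) ∣ (v * n ^ x - w * n ^ y) := by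
  have hr' : 0 < r.toNat := by omega
  have hs' : 0 < s.toNat := by omega
  haveI : NeZero r.toNat := ⟨by omega⟩
  haveI : NeZero s.toNat := ⟨by omega⟩
  have hsr : ((s.toNat : ℤ)) = s := Int.toNat_of_nonneg hs.le
  have hrr : ((r.toNat : ℤ)) = r := Int.toNat_of_nonneg hr.le
  have hdvd : s ∣ n ^ r.toNat - 1 := by
    have h := Int.ModEq.dvd hmod
    rw [show n ^ r.toNat - 1 = -(1 - n ^ r.toNat) by ring]
    exact h.neg_right
  have hgu : ((Int.gcd (n ^ u - 1) s : ℕ) : ℤ) ∣ n ^ u - 1 := Int.gcd_dvd_left _ _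
  have hgs : ((Int.gcd (n ^ u - 1) s : ℕ) : ℤ) ∣ s := Int.gcd_dvd_right _ _
  have hgr : ((Int.gcd (n ^ u - 1) s : ℕ) : ℤ) ∣ n ^ r.toNat - 1 := hgs.trans hdvd
  haveI hF : Fact ((n : ZMod s.toNat) ^ r.toNat = 1) := ⟨by
    have h : ((n ^ r.toNat : ℤ) : ZMod s.toNat) = ((1 : ℤ) : ZMod s.toNat) := by
      rw [ZMod.intCast_eq_intCast_iff]
      rwa [hsr]
    push_cast at h
    exact h⟩
  constructor
  · intro hconj
    set f : Bool → HGaux n r.toNat s.toNat := fun b => bif b then HGaux.T else HGaux.A with hf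
    have hrels : ∀ rel ∈ Hrels n r s, FreeGroup.lift f rel = 1 := by
      intro rel hrel
      simp only [Hrels, Set.mem_insert_iff, Set.mem_singleton_iff] at hrel
      rcases hrel with h | h | h <;> subst h <;>
        simp only [map_mul, map_inv, map_zpow, FreeGroup.lift_apply_of, hf]
      · show HGaux.T⁻¹ * HGaux.A * HGaux.T * HGaux.A ^ (-n) = 1
        rw [HGaux.A_zpow]
        ext
        · simp [HGaux.T, HGaux.A]
        · simp [HGaux.T, HGaux.A, HGaux.e_zero, HGaux.e_one hF.out]
      · show HGaux.T ^ r = 1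
        rw [HGaux.T_zpow]
        have : ((r : ℤ) : ZMod r.toNat) = 0 := by
          rw [← hrr]
          exact_mod_cast ZMod.natCast_self r.toNat
        rw [this]; rfl
      · show HGaux.A ^ s = 1
        rw [HGaux.A_zpow]
        have : ((s : ℤ) : ZMod s.toNat) = 0 := by
          rw [← hsr]
          exact_mod_cast ZMod.natCast_self s.toNat
        rw [this]; rfl
    let π : Hgrp n r s →* HGaux n r.toNat s.toNat := PresentedGroup.toGroup hrels
    have hπt : π (Ht n r s) = HGaux.T := PresentedGroup.toGroup.of hrels
    have hπa : π (Ha n r s) = HGaux.A := PresentedGroup.toGroup.of hrels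
    have himg : ∀ k v' : ℤ, π (Ht n r s ^ k * Ha n r s ^ v')
        = (⟨(k : ZMod r.toNat), (v' : ZMod s.toNat)⟩ : HGaux n r.toNat s.toNat) := by
      intro k v'
      rw [map_mul, map_zpow, map_zpow, hπt, hπa, HGaux.TA]
    have hc := π.map_isConj hconj
    rw [himg, himg] at hc
    obtain ⟨c, hcc⟩ := isConj_iff.mp hc
    rw [mul_inv_eq_iff_eq_mul] at hcc
    have hb := congrArg HGaux.b hcc
    simp only [HGaux.mul_b] at hb
    have he1 : HGaux.e n s.toNat (((u : ℤ)) : ZMod r.toNat)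
        = ((n ^ ((((u : ℤ)) : ZMod r.toNat).val) : ℤ) : ZMod s.toNat) := by
      rw [HGaux.e]; push_cast; rfl
    have he2 : HGaux.e n s.toNat c.x = ((n ^ c.x.val : ℤ) : ZMod s.toNat) := by
      rw [HGaux.e]; push_cast; rfl
    have hcb : c.b = ((c.b.val : ℤ) : ZMod s.toNat) := by
      push_cast
      exact (ZMod.natCast_rightInverse c.b).symm
    rw [he1, he2, hcb] at hb
    set u0 := (((u : ℤ)) : ZMod r.toNat).val with hu0def
    set y0 := c.x.val with hy0def
    set z0 := (c.b.val : ℤ) with hz0def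
    have hb2 : ((z0 * n ^ u0 + v : ℤ) : ZMod s.toNat) = ((w * n ^ y0 + z0 : ℤ) : ZMod s.toNat) := by
      push_cast
      push_cast at hb
      linear_combination hb
    have hmodeq := (ZMod.intCast_eq_intCast_iff _ _ _).mp hb2
    have hsdvd : s ∣ (w * n ^ y0 + z0) - (z0 * n ^ u0 + v) := by
      have h := hmodeq.dvd
      rwa [hsr] at h
    have hu0v : u0 = u % r.toNat := by
      rw [hu0def]
      rw [show (((u : ℤ)) : ZMod r.toNat) = ((u : ℕ) : ZMod r.toNat) by push_cast; rfl]
      exact ZMod.val_natCast r.toNat u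
    have hgn : ((Int.gcd (n ^ u - 1) s : ℕ) : ℤ) ∣ n ^ u0 - n ^ u :=
      pow_sub_pow_dvd n _ r.toNat hgr u0 u (by rw [hu0v]; exact Nat.mod_mod_of_dvd u dvd_rfl)
    have hgu0 : ((Int.gcd (n ^ u - 1) s : ℕ) : ℤ) ∣ n ^ u0 - 1 := by
      have h := dvd_add hgn hgu
      rw [show n ^ u0 - n ^ u + (n ^ u - 1) = n ^ u0 - 1 by ring] at h
      exact h
    refine ⟨0, y0, ?_⟩
    have h1 : ((Int.gcd (n ^ u - 1) s : ℕ) : ℤ) ∣ (w * n ^ y0 + z0) - (z0 * n ^ u0 + v) :=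
      hgs.trans hsdvd
    have h2 : ((Int.gcd (n ^ u - 1) s : ℕ) : ℤ) ∣ z0 * (n ^ u0 - 1) :=
      Dvd.dvd.mul_left hgu0 z0
    rw [show v * n ^ 0 - w * n ^ y0
        = -(((w * n ^ y0 + z0) - (z0 * n ^ u0 + v)) + z0 * (n ^ u0 - 1)) by ring]
    exact (dvd_add h1 h2).neg_right
  · rintro ⟨x, y, hxy⟩
    set m := x + y * (r.toNat - 1) with hm
    have hry : ((Int.gcd (n ^ u - 1) s : ℕ) : ℤ) ∣ n ^ (y * r.toNat) - 1 := by
      have h1 : (n ^ r.toNat - 1 : ℤ) ∣ (n ^ r.toNat) ^ y - 1 ^ y := sub_dvd_pow_sub_pow _ _ _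
      have h2 := hgr.trans h1
      rw [one_pow, ← pow_mul, mul_comm r.toNat y] at h2
      exact h2
    have hvm : ((Int.gcd (n ^ u - 1) s : ℕ) : ℤ) ∣ v * n ^ m - w := by
      have hid : v * n ^ m - w
          = n ^ (y * (r.toNat - 1)) * (v * n ^ x - w * n ^ y) + w * (n ^ (y * r.toNat) - 1) := by
        rw [hm, pow_add]
        rw [show y * r.toNat = y * (r.toNat - 1) + y by
          cases hrt : r.toNat with
          | zero => omega
          | succ k => simp [Nat.succ_sub_one, Nat.mul_succ]]
        rw [pow_add]
        ring
      rw [hid]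
      exact dvd_add (Dvd.dvd.mul_left hxy _) (Dvd.dvd.mul_left hry w)
    obtain ⟨q, hq⟩ : ((Int.gcd (n ^ u - 1) s : ℕ) : ℤ) ∣ w - v * n ^ m := by
      rw [show w - v * n ^ m = -(v * n ^ m - w) by ring]
      exact hvm.neg_right
    have hbez : ((Int.gcd (n ^ u - 1) s : ℕ) : ℤ)
        = (n ^ u - 1) * Int.gcdA (n ^ u - 1) s + s * Int.gcdB (n ^ u - 1) s :=
      Int.gcd_eq_gcd_ab _ _
    have hsd : s ∣ (v * n ^ m + (q * Int.gcdA (n ^ u - 1) s) * (n ^ u - 1)) - w := by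
      refine ⟨-(q * Int.gcdB (n ^ u - 1) s), ?_⟩
      linear_combination -hq - q * hbez
    rw [isConj_iff]
    refine ⟨Ha n r s ^ (q * Int.gcdA (n ^ u - 1) s) * Ht n r s ^ (-(m : ℤ)), ?_⟩
    rw [Hconj_elt]
    congr 1
    exact Ha_dvd_eq n r s hsd
end

section
/- Let n ∈ ℤ∖{0} and let r,s be positive integers with n^r ≡ 1 (mod s). Then H(n,r,s) is a finite solvable group of order r·s, and the cyclic subgroup generated by the image of a in H(n,r,s) has order exactly s. -/
namespace Stmt5Aux

open SemidirectProduct Multiplicative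

variable {n r s : ℤ}

lemma mk_rel {w : FreeGroup Bool} (hw : w ∈ Hrels n r s) :
    PresentedGroup.mk (Hrels n r s) w = 1 :=
  (QuotientGroup.eq_one_iff _).2 (Subgroup.subset_normalClosure hw)

lemma Ht_pow_r : Ht n r s ^ r = 1 := by
  have h := mk_rel (n := n) (r := r) (s := s) (w := (FreeGroup.of true) ^ r)
    (by simp [Hrels])
  rw [map_zpow] at h
  exact h

lemma Ha_pow_s : Ha n r s ^ s = 1 := by
  have h := mk_rel (n := n) (r := r) (s := s) (w := (FreeGroup.of false) ^ s)
    (by simp [Hrels])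
  rw [map_zpow] at h
  exact h

lemma conj_rel : (Ht n r s)⁻¹ * Ha n r s * Ht n r s = Ha n r s ^ n := by
  have h := mk_rel (n := n) (r := r) (s := s)
    (w := (FreeGroup.of true)⁻¹ * FreeGroup.of false * FreeGroup.of true *
      (FreeGroup.of false) ^ (-n)) (by simp [Hrels])
  rw [map_mul, map_mul, map_mul, map_inv, map_zpow] at h
  have h' : (Ht n r s)⁻¹ * Ha n r s * Ht n r s * (Ha n r s) ^ (-n) = 1 := h
  rw [zpow_neg, mul_inv_eq_one] at h'
  exact h'

lemma conj_zpow (m : ℤ) :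
    (Ht n r s)⁻¹ * (Ha n r s) ^ m * Ht n r s = (Ha n r s) ^ (n * m) := by
  have h : ((Ht n r s)⁻¹ * Ha n r s * ((Ht n r s)⁻¹)⁻¹) ^ m
      = (Ht n r s)⁻¹ * (Ha n r s) ^ m * ((Ht n r s)⁻¹)⁻¹ := _root_.conj_zpow
  rw [inv_inv] at h
  rw [← h, conj_rel, ← zpow_mul, mul_comm]

lemma a_t (m : ℤ) :
    (Ha n r s) ^ m * Ht n r s = Ht n r s * (Ha n r s) ^ (n * m) := by
  rw [← conj_zpow]; group

lemma key (j : ℕ) (k : ℤ) :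
    (Ha n r s) ^ k * (Ht n r s) ^ (j : ℤ) =
      (Ht n r s) ^ (j : ℤ) * (Ha n r s) ^ (n ^ j * k) := by
  induction j with
  | zero => simp
  | succ j ih =>
    have hc : ((j + 1 : ℕ) : ℤ) = (j : ℤ) + 1 := by push_cast; ring
    have he : n ^ (j + 1) * k = n * (n ^ j * k) := by ring
    rw [hc, zpow_add, zpow_one, ← mul_assoc, ih, mul_assoc, a_t, he, ← mul_assoc]

lemma t_reduce (hr : 0 < r) (j : ℤ) :
    (Ht n r s) ^ j = (Ht n r s) ^ (((j % r).toNat : ℤ)) := by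
  rw [Int.toNat_of_nonneg (Int.emod_nonneg _ hr.ne')]
  conv_lhs => rw [← Int.emod_add_mul_ediv j r]
  rw [zpow_add, zpow_mul, Ht_pow_r, one_zpow, mul_one]

lemma a_reduce (hs : 0 < s) (x : ℤ) :
    (Ha n r s) ^ x = (Ha n r s) ^ (((x % s).toNat : ℤ)) := by
  rw [Int.toNat_of_nonneg (Int.emod_nonneg _ hs.ne')]
  conv_lhs => rw [← Int.emod_add_mul_ediv x s]
  rw [zpow_add, zpow_mul, Ha_pow_s, one_zpow, mul_one]

lemma exists_nf (hr : 0 < r) (g : Hgrp n r s) :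
    ∃ j x : ℤ, g = Ht n r s ^ j * Ha n r s ^ x := by
  let T : Subgroup (Hgrp n r s) :=
    { carrier := {g | ∃ j x : ℤ, g = Ht n r s ^ j * Ha n r s ^ x}
      one_mem' := ⟨0, 0, by simp⟩
      mul_mem' := by
        rintro g1 g2 ⟨i, x, rfl⟩ ⟨j, y, rfl⟩
        refine ⟨i + ((j % r).toNat : ℤ), n ^ (j % r).toNat * x + y, ?_⟩
        rw [t_reduce hr j]
        calc Ht n r s ^ i * Ha n r s ^ x * (Ht n r s ^ (((j % r).toNat : ℤ)) * Ha n r s ^ y)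
            = Ht n r s ^ i * (Ha n r s ^ x * Ht n r s ^ (((j % r).toNat : ℤ))) * Ha n r s ^ y := by
              group
          _ = Ht n r s ^ i * (Ht n r s ^ (((j % r).toNat : ℤ)) *
                Ha n r s ^ (n ^ (j % r).toNat * x)) * Ha n r s ^ y := by rw [key]
          _ = Ht n r s ^ (i + ((j % r).toNat : ℤ)) * Ha n r s ^ (n ^ (j % r).toNat * x + y) := by
              rw [zpow_add, zpow_add]; group
      inv_mem' := by
        rintro g ⟨i, x, rfl⟩
        refine ⟨(((-i) % r).toNat : ℤ), n ^ ((-i) % r).toNat * (-x), ?_⟩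
        have h1 : (Ht n r s ^ i * Ha n r s ^ x)⁻¹
            = Ha n r s ^ (-x) * Ht n r s ^ (-i) := by
          rw [mul_inv_rev, ← zpow_neg, ← zpow_neg]
        rw [h1, t_reduce hr (-i), key] }
  have hT : T = ⊤ := by
    rw [eq_top_iff]; refine le_trans (le_of_eq (PresentedGroup.closure_range_of (Hrels n r s)).symm) ?_
    refine Subgroup.closure_le T |>.2 ?_
    rintro _ ⟨b, rfl⟩
    cases b with
    | false => exact ⟨0, 1, by rw [zpow_zero, zpow_one, one_mul]; rfl⟩
    | true => exact ⟨1, 0, by rw [zpow_zero, zpow_one, mul_one]; rfl⟩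
  have : g ∈ T := hT ▸ Subgroup.mem_top g
  exact this

lemma nf_surj (hr : 0 < r) (hs : 0 < s) :
    Function.Surjective (fun p : ZMod r.toNat × ZMod s.toNat =>
      Ht n r s ^ (p.1.val : ℤ) * Ha n r s ^ (p.2.val : ℤ)) := by
  haveI : NeZero r.toNat := ⟨by omega⟩
  haveI : NeZero s.toNat := ⟨by omega⟩
  intro g
  obtain ⟨j, x, rfl⟩ := exists_nf hr g
  refine ⟨(((j % r).toNat : ZMod r.toNat), ((x % s).toNat : ZMod s.toNat)), ?_⟩
  have hj1 : 0 ≤ j % r := Int.emod_nonneg _ hr.ne'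
  have hj2 : j % r < r := Int.emod_lt_of_pos _ hr
  have hx1 : 0 ≤ x % s := Int.emod_nonneg _ hs.ne'
  have hx2 : x % s < s := Int.emod_lt_of_pos _ hs
  simp only
  rw [ZMod.val_cast_of_lt (by omega), ZMod.val_cast_of_lt (by omega),
    ← t_reduce hr, ← a_reduce hs]

section Model

variable {m k : ℕ}

/-- Multiplication by a unit, as a multiplicative automorphism of
`Multiplicative (ZMod m)`. -/
def unitAut (m : ℕ) : (ZMod m)ˣ →* MulAut (Multiplicative (ZMod m)) where
  toFun v := AddEquiv.toMultiplicative (DistribMulAction.toAddAut ((ZMod m)ˣ) (ZMod m) v)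
  map_one' := by ext x; simp [AddEquiv.toMultiplicative]
  map_mul' u v := by ext x; simp [AddEquiv.toMultiplicative, mul_smul]

lemma unitAut_apply (v : (ZMod m)ˣ) (x : ZMod m) :
    unitAut m v (ofAdd x) = ofAdd ((v : ZMod m) * x) := rfl

/-- The homomorphism `Multiplicative (ZMod k) →* (ZMod m)ˣ` sending `ofAdd 1` to `u⁻¹`,
given `u ^ k = 1`. -/
def powUnit (u : (ZMod m)ˣ) (hu : u ^ k = 1) : Multiplicative (ZMod k) →* (ZMod m)ˣ :=
  AddMonoidHom.toMultiplicativeLeft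
    (ZMod.lift k ⟨zmultiplesHom _ (Additive.ofMul u⁻¹), by
      show (k : ℤ) • Additive.ofMul u⁻¹ = 0
      rw [← ofMul_zpow]
      have : (u⁻¹ : (ZMod m)ˣ) ^ (k : ℤ) = 1 := by
        rw [zpow_natCast, inv_pow, hu, inv_one]
      rw [this]; rfl⟩)

lemma powUnit_apply (u : (ZMod m)ˣ) (hu : u ^ k = 1) (c : ℤ) :
    powUnit u hu (ofAdd ((c : ZMod k))) = u⁻¹ ^ c := by
  simp only [powUnit, AddMonoidHom.toMultiplicativeLeft_apply_apply, toAdd_ofAdd,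
    ZMod.lift_coe, zmultiplesHom_apply, ← ofMul_zpow]
  rfl

/-- The action of `Multiplicative (ZMod k)` on `Multiplicative (ZMod m)`. -/
def phiM (u : (ZMod m)ˣ) (hu : u ^ k = 1) :
    Multiplicative (ZMod k) →* MulAut (Multiplicative (ZMod m)) :=
  (unitAut m).comp (powUnit u hu)

lemma sdp_card (u : (ZMod m)ˣ) (hu : u ^ k = 1) [NeZero m] [NeZero k] :
    Nat.card (Multiplicative (ZMod m) ⋊[phiM u hu] Multiplicative (ZMod k)) = m * k := by
  have e : (Multiplicative (ZMod m) ⋊[phiM u hu] Multiplicative (ZMod k)) ≃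
      Multiplicative (ZMod m) × Multiplicative (ZMod k) :=
    ⟨fun g => (g.left, g.right), fun p => ⟨p.1, p.2⟩, fun g => by cases g; rfl, fun p => rfl⟩
  rw [Nat.card_congr e, Nat.card_prod]
  show Nat.card (ZMod m) * Nat.card (ZMod k) = m * k
  rw [Nat.card_zmod, Nat.card_zmod]

lemma sdp_finite (u : (ZMod m)ˣ) (hu : u ^ k = 1) [NeZero m] [NeZero k] :
    Finite (Multiplicative (ZMod m) ⋊[phiM u hu] Multiplicative (ZMod k)) := by
  have e : (Multiplicative (ZMod m) ⋊[phiM u hu] Multiplicative (ZMod k)) ≃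
      Multiplicative (ZMod m) × Multiplicative (ZMod k) :=
    ⟨fun g => (g.left, g.right), fun p => ⟨p.1, p.2⟩, fun g => by cases g; rfl, fun p => rfl⟩
  exact Finite.of_equiv _ e.symm

end Model

end Stmt5Aux

/-- `H(n,r,s)` is a finite solvable group of order `r·s`, and the image of `a`
generates a cyclic subgroup of order exactly `s`. -/
theorem stmt5 (n : ℤ) (hn : n ≠ 0) (r s : ℤ) (hr : 0 < r) (hs : 0 < s)
    (hmod : n ^ r.toNat ≡ 1 [ZMOD s]) :
    Finite (Hgrp n r s) ∧ IsSolvable (Hgrp n r s) ∧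
      Nat.card (Hgrp n r s) = (r * s).toNat ∧
      Nat.card (Subgroup.zpowers (Ha n r s)) = s.toNat := by
  classical
  obtain ⟨R, hR⟩ : ∃ R : ℕ, r.toNat = R := ⟨r.toNat, rfl⟩
  obtain ⟨S, hS⟩ : ∃ S : ℕ, s.toNat = S := ⟨s.toNat, rfl⟩
  have hrR : r = (R : ℤ) := by omega
  have hsS : s = (S : ℤ) := by omega
  have hRpos : 0 < R := by omega
  have hSpos : 0 < S := by omega
  haveI : NeZero R := ⟨hRpos.ne'⟩
  haveI : NeZero S := ⟨hSpos.ne'⟩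
  haveI : NeZero r.toNat := ⟨by omega⟩
  haveI : NeZero s.toNat := ⟨by omega⟩
  open Stmt5Aux SemidirectProduct Multiplicative in
  -- the unit `n` of `ZMod S`
  have hnS : ((n : ZMod S)) ^ R = 1 := by
    have h2 : ((n ^ R : ℤ) : ZMod S) = ((1 : ℤ) : ZMod S) := by
      rw [ZMod.intCast_eq_intCast_iff]
      show n ^ R ≡ 1 [ZMOD ((S : ℕ) : ℤ)]
      rw [← hsS]
      rw [hR] at hmod
      exact hmod
    push_cast at h2
    exact h2
  have hval_inv : (n : ZMod S) * (n : ZMod S) ^ (R - 1) = 1 := by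
    rw [← pow_succ']
    have : R - 1 + 1 = R := by omega
    rw [this, hnS]
  have hinv_val : (n : ZMod S) ^ (R - 1) * (n : ZMod S) = 1 := by
    rw [← pow_succ]
    have : R - 1 + 1 = R := by omega
    rw [this, hnS]
  set u : (ZMod S)ˣ := ⟨(n : ZMod S), (n : ZMod S) ^ (R - 1), hval_inv, hinv_val⟩ with hu_def
  have hu : u ^ R = 1 := by
    ext
    rw [Units.val_pow_eq_pow_val]
    exact hnS
  set G := Multiplicative (ZMod S) ⋊[Stmt5Aux.phiM u hu] Multiplicative (ZMod R) with hG
  set AA : G := SemidirectProduct.inl (Multiplicative.ofAdd (1 : ZMod S)) with hAA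
  set TT : G := SemidirectProduct.inr (Multiplicative.ofAdd (1 : ZMod R)) with hTT
  have hAApow : ∀ c : ℤ, AA ^ c = SemidirectProduct.inl (Multiplicative.ofAdd ((c : ZMod S))) := by
    intro c
    rw [hAA, ← map_zpow]
    congr 1
    rw [← ofAdd_zsmul]
    congr 1
    rw [zsmul_eq_mul, mul_one]
  have hTTpow : ∀ c : ℤ, TT ^ c = SemidirectProduct.inr (Multiplicative.ofAdd ((c : ZMod R))) := by
    intro c
    rw [hTT, ← map_zpow]
    congr 1
    rw [← ofAdd_zsmul]
    congr 1
    rw [zsmul_eq_mul, mul_one]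
  -- the relations hold in G
  have hconjG : TT⁻¹ * AA * TT = AA ^ n := by
    have h1 : TT⁻¹ * AA * TT
        = SemidirectProduct.inl ((Stmt5Aux.phiM u hu (Multiplicative.ofAdd (1 : ZMod R)))⁻¹
            (Multiplicative.ofAdd (1 : ZMod S))) := by
      rw [SemidirectProduct.inl_aut_inv, hAA, hTT, map_inv]
    rw [h1, hAApow]
    congr 1
    have h2 : Stmt5Aux.phiM u hu (Multiplicative.ofAdd (1 : ZMod R))
        = Stmt5Aux.unitAut S u⁻¹ := by
      show Stmt5Aux.unitAut S (Stmt5Aux.powUnit u hu (Multiplicative.ofAdd (1 : ZMod R))) = _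
      congr 1
      have : (1 : ZMod R) = ((1 : ℤ) : ZMod R) := by push_cast; rfl
      rw [this, Stmt5Aux.powUnit_apply, zpow_one]
    rw [h2, ← map_inv, inv_inv]
    rw [Stmt5Aux.unitAut_apply]
    congr 1
    show (n : ZMod S) * 1 = (n : ZMod S)
    rw [mul_one]
  have hTTr : TT ^ r = 1 := by
    rw [hTTpow]
    have : ((r : ℤ) : ZMod R) = 0 := by
      rw [hrR]
      push_cast
      exact ZMod.natCast_self R
    rw [this]
    simp
  have hAAs : AA ^ s = 1 := by
    rw [hAApow]
    have : ((s : ℤ) : ZMod S) = 0 := by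
      rw [hsS]
      push_cast
      exact ZMod.natCast_self S
    rw [this]
    simp
  -- the homomorphism from the presented group
  have hrels : ∀ w ∈ Hrels n r s, FreeGroup.lift (fun b => cond b TT AA) w = 1 := by
    intro w hw
    simp only [Hrels, Set.mem_insert_iff, Set.mem_singleton_iff] at hw
    rcases hw with hw | hw | hw
    · subst hw
      simp only [map_mul, map_inv, map_zpow, FreeGroup.lift_apply_of]
      show TT⁻¹ * AA * TT * AA ^ (-n) = 1
      rw [hconjG, zpow_neg, mul_inv_cancel]
    · subst hw
      rw [map_zpow, FreeGroup.lift_apply_of]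
      exact hTTr
    · subst hw
      rw [map_zpow, FreeGroup.lift_apply_of]
      exact hAAs
  set Φ : Hgrp n r s →* G := PresentedGroup.toGroup hrels with hΦ
  have hΦa : Φ (Ha n r s) = AA := PresentedGroup.toGroup.of hrels
  have hΦt : Φ (Ht n r s) = TT := PresentedGroup.toGroup.of hrels
  -- surjectivity of Φ
  have hΦsurj : Function.Surjective Φ := by
    intro g
    refine ⟨Ha n r s ^ ((g.left.toAdd.val : ℤ)) * Ht n r s ^ ((g.right.toAdd.val : ℤ)), ?_⟩
    rw [map_mul, map_zpow, map_zpow, hΦa, hΦt, hAApow, hTTpow]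
    have hl : ((g.left.toAdd.val : ℤ) : ZMod S) = g.left.toAdd := by
      push_cast
      rw [ZMod.natCast_val, ZMod.cast_id]
    have hr' : ((g.right.toAdd.val : ℤ) : ZMod R) = g.right.toAdd := by
      push_cast
      rw [ZMod.natCast_val, ZMod.cast_id]
    rw [hl, hr']
    show SemidirectProduct.inl g.left * SemidirectProduct.inr g.right = g
    exact SemidirectProduct.inl_left_mul_inr_right g
  -- cardinalities
  haveI hGfin : Finite G := Stmt5Aux.sdp_finite u hu
  have hGcard : Nat.card G = S * R := Stmt5Aux.sdp_card u hu
  have hnfsurj := Stmt5Aux.nf_surj (n := n) hr hs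
  haveI hHfin : Finite (Hgrp n r s) := Finite.of_surjective _ hnfsurj
  have hle : Nat.card (Hgrp n r s) ≤ R * S := by
    have := Nat.card_le_card_of_surjective _ hnfsurj
    rwa [Nat.card_prod, Nat.card_zmod, Nat.card_zmod, hR, hS] at this
  have hge : S * R ≤ Nat.card (Hgrp n r s) := by
    rw [← hGcard]
    exact Nat.card_le_card_of_surjective Φ hΦsurj
  have hcard : Nat.card (Hgrp n r s) = R * S := le_antisymm hle (by rwa [mul_comm] at hge)
  -- Φ is bijective
  have hΦbij : Function.Bijective Φ := by
    apply hΦsurj.bijective_of_nat_card_le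
    rw [hcard, hGcard]
    exact (Nat.mul_comm R S).le
  -- solvability
  haveI h1 : IsSolvable (Multiplicative (ZMod S)) := isSolvable_of_comm (fun a b => mul_comm a b)
  haveI h2 : IsSolvable (Multiplicative (ZMod R)) := isSolvable_of_comm (fun a b => mul_comm a b)
  haveI hGsolv : IsSolvable G :=
    solvable_of_ker_le_range SemidirectProduct.inl SemidirectProduct.rightHom
      (le_of_eq SemidirectProduct.range_inl_eq_ker_rightHom.symm)
  haveI hHsolv : IsSolvable (Hgrp n r s) := @solvable_of_solvable_injective _ _ _ _ _ hΦbij.injective hGsolv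
  -- order of a
  have hords : orderOf (Ha n r s) = S := by
    have hd1 : orderOf (Ha n r s) ∣ S := by
      apply orderOf_dvd_of_pow_eq_one
      have h3 : Ha n r s ^ ((S : ℕ) : ℤ) = 1 := by
        rw [← hsS]
        exact Stmt5Aux.Ha_pow_s
      rw [zpow_natCast] at h3
      exact h3
    have hAAord : orderOf AA = S := by
      rw [hAA, orderOf_injective SemidirectProduct.inl SemidirectProduct.inl_injective,
        orderOf_ofAdd_eq_addOrderOf, ZMod.addOrderOf_one]
    have hd2 : S ∣ orderOf (Ha n r s) := by
      rw [← hAAord, ← hΦa]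
      exact orderOf_map_dvd Φ _
    exact Nat.dvd_antisymm hd1 hd2
  refine ⟨hHfin, hHsolv, ?_, ?_⟩
  · rw [hcard]
    have : r * s = ((R * S : ℕ) : ℤ) := by rw [hrR, hsS]; push_cast; ring
    rw [this, Int.toNat_natCast]
  · rw [Nat.card_zpowers, hords, hS]
end

section
/- Let n ∈ ℤ∖{0}, let X be a periodic (torsion) group, and let σ : BS(1,n) → X be a surjective group homomorphism. Let r be the order of σ(t) and s the order of σ(a). Then r and s are finite, n^r ≡ 1 (mod s), and σ factors through the natural projection η : BS(1,n) → H(n,r,s): there exists a homomorphism ρ : H(n,r,s) → X with ρ ∘ η = σ. -/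
-- auxiliary: conjugation iterate
lemma conj_pow_aux {X : Type} [Group X] (n : ℤ) (u v : X)
    (h : u⁻¹ * v * u = v ^ n) (k : ℕ) : (u ^ k)⁻¹ * v * u ^ k = v ^ (n ^ k) := by
  induction k with
  | zero => simp
  | succ k ih =>
    have h2 : ∀ m : ℤ, u⁻¹ * v ^ m * u = v ^ (n * m) := by
      intro m
      calc u⁻¹ * v ^ m * u = (u⁻¹ * v * u⁻¹⁻¹) ^ m := by rw [conj_zpow, inv_inv]
        _ = (v ^ n) ^ m := by rw [inv_inv, h]
        _ = v ^ (n * m) := by rw [← zpow_mul]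
    calc (u ^ (k+1))⁻¹ * v * u ^ (k+1)
        = u⁻¹ * ((u ^ k)⁻¹ * v * u ^ k) * u := by
          rw [pow_succ]; group
      _ = u⁻¹ * v ^ (n ^ k) * u := by rw [ih]
      _ = v ^ (n * n ^ k) := h2 _
      _ = v ^ (n ^ (k+1)) := by rw [pow_succ']

-- relation in BS 1 n
lemma BS_rel_s6 (n : ℤ) : (BSt 1 n)⁻¹ * (BSa 1 n) * (BSt 1 n) * (BSa 1 n) ^ (-n) = 1 := by
  have hmem : ((FreeGroup.of true)⁻¹ * (FreeGroup.of false) ^ (1:ℤ) * FreeGroup.of true *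
      (FreeGroup.of false) ^ (-n)) ∈ Subgroup.normalClosure (BSrels 1 n) :=
    Subgroup.subset_normalClosure rfl
  have h1 : PresentedGroup.mk (BSrels 1 n) ((FreeGroup.of true)⁻¹ *
      (FreeGroup.of false) ^ (1:ℤ) * FreeGroup.of true * (FreeGroup.of false) ^ (-n)) = 1 :=
    (QuotientGroup.eq_one_iff _).2 hmem
  simp only [map_mul, map_inv, map_zpow, zpow_one] at h1
  exact h1

lemma H_rel (n r s : ℤ) : (Ht n r s)⁻¹ * (Ha n r s) * (Ht n r s) * (Ha n r s) ^ (-n) = 1 := by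
  have hmem : ((FreeGroup.of true)⁻¹ * FreeGroup.of false * FreeGroup.of true *
      (FreeGroup.of false) ^ (-n)) ∈ Subgroup.normalClosure (Hrels n r s) :=
    Subgroup.subset_normalClosure (Set.mem_insert _ _)
  have h1 : PresentedGroup.mk (Hrels n r s) ((FreeGroup.of true)⁻¹ *
      FreeGroup.of false * FreeGroup.of true * (FreeGroup.of false) ^ (-n)) = 1 :=
    (QuotientGroup.eq_one_iff _).2 hmem
  simp only [map_mul, map_inv, map_zpow, zpow_one] at h1
  exact h1


/-- every homomorphism of `BS(1,n)` onto a periodic group factors through the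
natural projection `η : BS(1,n) → H(n,r,s)`, where `r`, `s` are the orders of the images of
`t` and `a`. -/
theorem stmt6 (n : ℤ) (hn : n ≠ 0) (X : Type) [Group X] (hX : ∀ x : X, IsOfFinOrder x)
    (σ : BS 1 n →* X) (hσ : Function.Surjective σ) :
    0 < orderOf (σ (BSt 1 n)) ∧ 0 < orderOf (σ (BSa 1 n)) ∧
    n ^ orderOf (σ (BSt 1 n)) ≡ 1 [ZMOD (orderOf (σ (BSa 1 n)) : ℤ)] ∧
    ∃ η : BS 1 n →* Hgrp n (orderOf (σ (BSt 1 n)) : ℤ) (orderOf (σ (BSa 1 n)) : ℤ),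
      η (BSa 1 n) = Ha n (orderOf (σ (BSt 1 n)) : ℤ) (orderOf (σ (BSa 1 n)) : ℤ) ∧
      η (BSt 1 n) = Ht n (orderOf (σ (BSt 1 n)) : ℤ) (orderOf (σ (BSa 1 n)) : ℤ) ∧
      ∃ ρ : Hgrp n (orderOf (σ (BSt 1 n)) : ℤ) (orderOf (σ (BSa 1 n)) : ℤ) →* X,
        ρ.comp η = σ := by
  set u := σ (BSt 1 n) with hu
  set v := σ (BSa 1 n) with hv
  set r := orderOf u with hr
  set s := orderOf v with hs
  have hrpos : 0 < r := (hX u).orderOf_pos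
  have hspos : 0 < s := (hX v).orderOf_pos
  -- relation in X
  have hrelX : u⁻¹ * v * u * v ^ (-n) = 1 := by
    have := congrArg σ (BS_rel_s6 n)
    simpa [map_mul, map_inv, map_zpow] using this
  have hconj : u⁻¹ * v * u = v ^ n := by
    have := hrelX
    rw [mul_eq_one_iff_eq_inv] at this
    rw [this, ← zpow_neg, neg_neg]
  -- congruence
  have hiter := conj_pow_aux n u v hconj r
  rw [pow_orderOf_eq_one u] at hiter
  simp only [inv_one, one_mul, mul_one] at hiter
  have hvv : v ^ (n ^ r - 1) = 1 := by
    rw [zpow_sub, ← hiter, zpow_one, mul_inv_cancel]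
  have hmod : (n ^ r - 1) ≡ 0 [ZMOD (s : ℤ)] := by
    have := zpow_eq_one_iff_modEq.mp hvv
    simpa [hs] using this
  have hcong : n ^ r ≡ 1 [ZMOD (s : ℤ)] := by
    have := Int.ModEq.add_right 1 hmod
    simpa using this
  refine ⟨hrpos, hspos, hcong, ?_⟩
  -- construct η
  set f : Bool → Hgrp n (r : ℤ) (s : ℤ) := fun b => if b then Ht n r s else Ha n r s with hf
  have hfrels : ∀ w ∈ BSrels 1 n, FreeGroup.lift f w = 1 := by
    rintro w rfl
    simpa [hf, map_mul, map_inv, map_zpow] using H_rel n (r : ℤ) (s : ℤ)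
  set η : BS 1 n →* Hgrp n (r : ℤ) (s : ℤ) := PresentedGroup.toGroup hfrels with hη
  have hηa : η (BSa 1 n) = Ha n r s := by
    show PresentedGroup.toGroup hfrels (PresentedGroup.of false) = Ha n r s
    rw [PresentedGroup.toGroup.of]
    simp [hf]
  have hηt : η (BSt 1 n) = Ht n r s := by
    show PresentedGroup.toGroup hfrels (PresentedGroup.of true) = Ht n r s
    rw [PresentedGroup.toGroup.of]
    simp [hf]
  -- construct ρ
  set g : Bool → X := fun b => if b then u else v with hg
  have hgrels : ∀ w ∈ Hrels n (r : ℤ) (s : ℤ), FreeGroup.lift g w = 1 := by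
    rintro w hw
    simp only [Hrels, Set.mem_insert_iff, Set.mem_singleton_iff] at hw
    rcases hw with rfl | rfl | rfl
    · simpa [hg, map_mul, map_inv, map_zpow] using hrelX
    · rw [zpow_natCast, map_pow, FreeGroup.lift_apply_of]
      exact pow_orderOf_eq_one u
    · rw [zpow_natCast, map_pow, FreeGroup.lift_apply_of]
      exact pow_orderOf_eq_one v
  refine ⟨η, hηa, hηt, PresentedGroup.toGroup hgrels, ?_⟩
  refine PresentedGroup.ext fun b => ?_
  cases b
  · show (PresentedGroup.toGroup hgrels) (η (BSa 1 n)) = σ (BSa 1 n)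
    rw [hηa]
    show PresentedGroup.toGroup hgrels (PresentedGroup.of false) = v
    rw [PresentedGroup.toGroup.of]
    simp [hg]
  · show (PresentedGroup.toGroup hgrels) (η (BSt 1 n)) = σ (BSt 1 n)
    rw [hηt]
    show PresentedGroup.toGroup hgrels (PresentedGroup.of true) = u
    rw [PresentedGroup.toGroup.of]
    simp [hg]
end

section
/- Let 𝒞 be a root class of groups consisting only of periodic groups and let n ∈ ℤ∖{0}. If BS(1,n) is conjugacy 𝒞-separable, then BS(1,n) is conjugacy 𝓕𝓢_{𝔓(𝒞)}-separable. -/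
/-- Key structural lemma: a torsion group generated by two elements `β, τ` with
`τ⁻¹ β τ = β ^ n` is finite and solvable. -/
private lemma key_struct {G : Type} [Group G] {β τ : G} {n : ℤ}
    (hgen : Subgroup.closure ({β, τ} : Set G) = ⊤)
    (hrel : τ⁻¹ * β * τ = β ^ n)
    (htor : ∀ g : G, IsOfFinOrder g) :
    Finite G ∧ IsSolvable G := by
  set N := Subgroup.zpowers β with hNdef
  have hconj : ∀ (g x : G) (i : ℤ), g * x ^ i * g⁻¹ = (g * x * g⁻¹) ^ i :=
    fun g x i => conj_zpow.symm
  have hconj' : ∀ (x : G) (i : ℤ), τ⁻¹ * x ^ i * τ = (τ⁻¹ * x * τ) ^ i := by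
    intro x i
    have := hconj τ⁻¹ x i
    simpa using this
  -- downward conjugation
  have hd : ∀ d : ℕ, τ⁻¹ ^ d * β * τ ^ d = β ^ (n ^ d) := by
    intro d
    induction d with
    | zero => simp
    | succ d ih =>
      have h1 : τ⁻¹ ^ (d + 1) * β * τ ^ (d + 1) = τ⁻¹ * (τ⁻¹ ^ d * β * τ ^ d) * τ := by
        rw [pow_succ' τ⁻¹, pow_succ τ]; group
      rw [h1, ih, hconj' β (n ^ d), hrel, ← zpow_mul, ← pow_succ']
  -- order of τ
  set r := orderOf τ with hrdef
  have hr0 : 0 < r := (htor τ).orderOf_pos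
  have hτr : τ ^ r = 1 := pow_orderOf_eq_one τ
  have hτinv : τ⁻¹ = τ ^ (r - 1) := by
    refine inv_eq_of_mul_eq_one_right ?_
    rw [← pow_succ' τ, Nat.sub_add_cancel hr0]
    exact hτr
  have hτeq : τ = τ⁻¹ ^ (r - 1) := by
    rw [inv_pow, ← hτinv, inv_inv]
  have hup : τ * β * τ⁻¹ = β ^ (n ^ (r - 1)) := by
    calc τ * β * τ⁻¹ = τ⁻¹ ^ (r - 1) * β * τ ^ (r - 1) := by rw [← hτeq, ← hτinv]
      _ = β ^ (n ^ (r - 1)) := hd (r - 1)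
  -- conjugation preserves N
  have hmemN : ∀ (m : ℤ) (i : ℤ), (β ^ m) ^ i ∈ N := by
    intro m i
    rw [← zpow_mul]
    exact Subgroup.zpow_mem _ (Subgroup.mem_zpowers β) _
  have hP : ∀ g : G, ∀ x ∈ N, g * x * g⁻¹ ∈ N ∧ g⁻¹ * x * g ∈ N := by
    intro g
    have hg : g ∈ Subgroup.closure ({β, τ} : Set G) := by rw [hgen]; trivial
    induction hg using Subgroup.closure_induction with
    | mem z hz =>
      intro x hx
      obtain ⟨k, rfl⟩ := Subgroup.mem_zpowers_iff.mp hx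
      rcases hz with h | h
      · rw [h]
        constructor
        · have : β * β ^ k * β⁻¹ = β ^ k := by group
          rw [this]; exact Subgroup.zpow_mem _ (Subgroup.mem_zpowers β) _
        · have : β⁻¹ * β ^ k * β = β ^ k := by group
          rw [this]; exact Subgroup.zpow_mem _ (Subgroup.mem_zpowers β) _
      · rw [h]
        constructor
        · rw [hconj τ β k, hup]; exact hmemN _ _
        · rw [hconj' β k, hrel]; exact hmemN _ _
    | one =>
      intro x hx
      simp only [one_mul, inv_one, mul_one]
      exact ⟨hx, hx⟩
    | mul a b ha hb iha ihb =>
      intro x hx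
      constructor
      · have h1 := (ihb x hx).1
        have h2 := (iha _ h1).1
        have : a * (b * x * b⁻¹) * a⁻¹ = a * b * x * (a * b)⁻¹ := by group
        rwa [this] at h2
      · have h1 := (iha x hx).2
        have h2 := (ihb _ h1).2
        have : b⁻¹ * (a⁻¹ * x * a) * b = (a * b)⁻¹ * x * (a * b) := by group
        rwa [this] at h2
    | inv a ha iha =>
      intro x hx
      exact ⟨by simpa using (iha x hx).2, by simpa using (iha x hx).1⟩
  have hnormal : N.Normal := ⟨fun x hx g => (hP g x hx).1⟩
  haveI := hnormal
  let π : G →* G ⧸ N := QuotientGroup.mk' N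
  have hπβ : π β = 1 := (QuotientGroup.eq_one_iff β).mpr (Subgroup.mem_zpowers β)
  have hπτ : ∀ g : G, ∃ k : ℤ, π g = (π τ) ^ k := by
    intro g
    have hg : g ∈ Subgroup.closure ({β, τ} : Set G) := by rw [hgen]; trivial
    induction hg using Subgroup.closure_induction with
    | mem z hz =>
      rcases hz with h | h
      · exact ⟨0, by rw [h, hπβ]; simp⟩
      · exact ⟨1, by rw [h]; simp⟩
    | one => exact ⟨0, by simp⟩
    | mul a b ha hb iha ihb =>
      obtain ⟨k, hk⟩ := iha
      obtain ⟨l, hl⟩ := ihb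
      exact ⟨k + l, by rw [map_mul, hk, hl, zpow_add]⟩
    | inv a ha iha =>
      obtain ⟨k, hk⟩ := iha
      exact ⟨-k, by rw [map_inv, hk, zpow_neg]⟩
  have hcomm : ∀ g h : G, g * h * g⁻¹ * h⁻¹ ∈ N := by
    intro g h
    obtain ⟨k, hk⟩ := hπτ g
    obtain ⟨l, hl⟩ := hπτ h
    have h1 : π (g * h * g⁻¹ * h⁻¹) = 1 := by
      rw [map_mul, map_mul, map_mul, map_inv, map_inv, hk, hl]
      group
    exact (QuotientGroup.eq_one_iff _).mp h1
  -- solvability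
  have hds1 : derivedSeries G 1 ≤ N := by
    rw [show (1 : ℕ) = 0 + 1 from rfl, derivedSeries_succ, derivedSeries_zero]
    refine Subgroup.commutator_le.mpr ?_
    intro g _ h _
    simpa [commutatorElement_def, mul_assoc] using hcomm g h
  have hds2 : derivedSeries G 2 = ⊥ := by
    refine le_bot_iff.mp ?_
    rw [show (2 : ℕ) = 1 + 1 from rfl, derivedSeries_succ]
    refine le_trans (Subgroup.commutator_mono hds1 hds1) ?_
    refine Subgroup.commutator_le.mpr ?_
    intro g hg h hh
    obtain ⟨k, rfl⟩ := Subgroup.mem_zpowers_iff.mp hg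
    obtain ⟨l, rfl⟩ := Subgroup.mem_zpowers_iff.mp hh
    have : (open scoped commutatorElement in ⁅β ^ k, β ^ l⁆) = 1 :=
      commutatorElement_eq_one_iff_commute.mpr ((Commute.refl β).zpow_zpow k l)
    rw [this]; exact Subgroup.one_mem ⊥
  have hsolv : IsSolvable G := ⟨⟨2, hds2⟩⟩
  -- finiteness
  have hNfin : Finite N := (htor β).finite_zpowers.to_subtype
  have hQfin : Finite (G ⧸ N) := by
    have hτord : IsOfFinOrder (π τ) := π.isOfFinOrder (htor τ)
    have hsub : (Set.univ : Set (G ⧸ N)) ⊆ (Subgroup.zpowers (π τ) : Set (G ⧸ N)) := by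
      intro x _
      obtain ⟨g, rfl⟩ := QuotientGroup.mk'_surjective N x
      obtain ⟨k, hk⟩ := hπτ g
      exact hk ▸ Subgroup.zpow_mem _ (Subgroup.mem_zpowers _) _
    exact Set.finite_univ_iff.mp (hτord.finite_zpowers.subset hsub)
  have hGfin : Finite G :=
    Finite.of_equiv _ (Subgroup.groupEquivQuotientProdSubgroup (s := N)).symm
  exact ⟨hGfin, hsolv⟩

/-- if `BS(1,n)` is conjugacy `𝒞`-separable for a root class `𝒞` of periodic
groups, then it is conjugacy `𝓕𝓢_{𝔓(𝒞)}`-separable. -/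
theorem stmt7 (C : GroupClass) (hroot : IsRootClass C) (hper : PeriodicClass C)
    (n : ℤ) (hn : n ≠ 0) (h : ConjSep C (BS 1 n)) :
    ConjSep (FSClass (PrimesOf C)) (BS 1 n) := by
  -- the relation in BS(1,n)
  have hrel1 : (BSt 1 n)⁻¹ * (BSa 1 n) * (BSt 1 n) * (BSa 1 n) ^ (-n) = 1 := by
    have hmem : ((FreeGroup.of true)⁻¹ * (FreeGroup.of false) ^ (1 : ℤ) * FreeGroup.of true *
        (FreeGroup.of false) ^ (-n)) ∈ BSrels 1 n := by
      simp [BSrels]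
    have h1 : PresentedGroup.mk (BSrels 1 n)
        ((FreeGroup.of true)⁻¹ * (FreeGroup.of false) ^ (1 : ℤ) * FreeGroup.of true *
          (FreeGroup.of false) ^ (-n)) = 1 :=
      (QuotientGroup.eq_one_iff _).mpr (Subgroup.subset_normalClosure hmem)
    rw [zpow_neg]
    simp [BSa, BSt, PresentedGroup.of, map_mul, map_inv, map_zpow] at h1
    exact h1
  have hrelBS : (BSt 1 n)⁻¹ * BSa 1 n * BSt 1 n = (BSa 1 n) ^ n := by
    have h2 := mul_eq_one_iff_eq_inv.mp hrel1
    rwa [← zpow_neg, neg_neg] at h2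
  -- generation of BS(1,n) by a and t
  have hrange : Set.range (PresentedGroup.of : Bool → BS 1 n) =
      ({BSa 1 n, BSt 1 n} : Set (BS 1 n)) := by
    ext x
    constructor
    · rintro ⟨b, rfl⟩
      cases b
      · exact Or.inl rfl
      · exact Or.inr rfl
    · rintro (rfl | rfl)
      · exact ⟨false, rfl⟩
      · exact ⟨true, rfl⟩
  have hgenBS : Subgroup.closure ({BSa 1 n, BSt 1 n} : Set (BS 1 n)) = ⊤ := by
    rw [← hrange]
    exact PresentedGroup.closure_range_of _
  intro x y hxy
  obtain ⟨G, instG, hCG, σ, hσ, hσc⟩ := h x y hxy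
  letI := instG
  have hgen : Subgroup.closure ({σ (BSa 1 n), σ (BSt 1 n)} : Set G) = ⊤ := by
    rw [← Set.image_pair, ← MonoidHom.map_closure, hgenBS,
      Subgroup.map_top_of_surjective σ hσ]
  have hrelG : (σ (BSt 1 n))⁻¹ * σ (BSa 1 n) * σ (BSt 1 n) = σ (BSa 1 n) ^ n := by
    rw [← map_inv, ← map_mul, ← map_mul, hrelBS, map_zpow]
  have htor : ∀ g : G, IsOfFinOrder g := hper G hCG
  obtain ⟨hGfin, hsolv⟩ := key_struct hgen hrelG htor
  refine ⟨G, instG, ⟨hGfin, hsolv, ?_⟩, σ, hσ, hσc⟩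
  intro p hp hdvd
  haveI : Fact p.Prime := ⟨hp⟩
  haveI := hGfin
  obtain ⟨g, hg⟩ := exists_prime_orderOf_dvd_card' (G := G) p hdvd
  exact ⟨hp, G, instG, hCG, g, hg ▸ dvd_rfl⟩
end

section
/- Let 𝒞 be a root class of groups consisting only of periodic groups. A finite solvable group G belongs to 𝒞 if and only if G is a 𝔓(𝒞)-group, i.e. the order of G is a 𝔓(𝒞)-number. -/
/-- Any root class contains the trivial group (any subsingleton group). -/
lemma trivial_mem_rootClass (C : GroupClass) (hroot : IsRootClass C)
    (G : Type) [Group G] [Subsingleton G] : C G := by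
  obtain ⟨X, _, hX, _⟩ := hroot.has_nontrivial
  have hbot : C ((⊥ : Subgroup X) : Type) := hroot.subgroup_closed X ⊥ hX
  haveI : Unique G := ⟨⟨1⟩, fun a => Subsingleton.elim a 1⟩
  exact hroot.iso_closed _ G MulEquiv.ofUnique hbot

/-- Any group of order `p` with `p ∈ 𝔓(C)` belongs to `C`. -/
lemma prime_card_mem (C : GroupClass) (hroot : IsRootClass C) (hper : PeriodicClass C)
    {p : ℕ} (hp : p ∈ PrimesOf C) (K : Type) [Group K] (hK : Nat.card K = p) : C K := by
  obtain ⟨hpp, X, _, hX, x, hdvd⟩ := hp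
  haveI : Fact p.Prime := ⟨hpp⟩
  have hx : orderOf x ≠ 0 := (hper X hX x).orderOf_pos.ne'
  set y := x ^ (orderOf x / p) with hy
  have hyp : orderOf y = p := orderOf_pow_orderOf_div hx hdvd
  have hS : C ((Subgroup.zpowers y : Subgroup X) : Type) :=
    hroot.subgroup_closed X (Subgroup.zpowers y) hX
  have hcardS : Nat.card (Subgroup.zpowers y) = p := by
    rw [Nat.card_zpowers, hyp]
  exact hroot.iso_closed _ K (mulEquivOfPrimeCardEq hcardS hK) hS

lemma aux_ind (C : GroupClass) (hroot : IsRootClass C) (hper : PeriodicClass C) :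
    ∀ n : ℕ, ∀ (G : Type) [Group G] [Finite G], Nat.card G = n → IsSolvable G →
      IsPNat (PrimesOf C) n → C G := by
  intro n
  induction n using Nat.strong_induction_on with
  | _ n ih =>
    intro G _ _ hcard hsolv hP
    have hn0 : 0 < n := hcard ▸ Nat.card_pos
    rcases subsingleton_or_nontrivial G with hG | hG
    · exact trivial_mem_rootClass C hroot G
    -- nontrivial case
    have key : ∀ (N : Subgroup G) [N.Normal], Nat.card N < n → Nat.card (G ⧸ N) < n →
        C N → C G := by
      intro N _ hN hQ hCN
      refine hroot.extension_closed G N hCN ?_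
      exact ih _ hQ (G ⧸ N) rfl (haveI : Group.IsSolvable G := hsolv; Group.isSolvable_of_surjective (QuotientGroup.mk'_surjective N))
        (fun p hp hd => hP p hp (hd.trans (hcard ▸ Subgroup.card_quotient_dvd_card N)))
    rcases eq_or_ne (commutator G) ⊥ with hbot | hbot
    · -- abelian case
      have hcomm : ∀ a b : G, a * b = b * a := by
        intro a b
        have : (open scoped commutatorElement in ⁅a, b⁆) ∈ commutator G :=
          Subgroup.commutator_mem_commutator (Subgroup.mem_top a) (Subgroup.mem_top b)
        rw [hbot, Subgroup.mem_bot] at this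
        exact commutatorElement_eq_one_iff_mul_comm.mp this
      obtain ⟨g, hg⟩ := exists_ne (1 : G)
      have hog : orderOf g ≠ 0 := (isOfFinOrder_of_finite g).orderOf_pos.ne'
      have hog1 : orderOf g ≠ 1 := fun h => hg (orderOf_eq_one_iff.mp h)
      set p := (orderOf g).minFac with hpdef
      have hpp : p.Prime := Nat.minFac_prime hog1
      have hpdvd : p ∣ orderOf g := Nat.minFac_dvd _
      set y := g ^ (orderOf g / p) with hy
      have hyp : orderOf y = p := orderOf_pow_orderOf_div hog hpdvd
      have hpn : p ∣ n := hcard ▸ (hyp ▸ orderOf_dvd_natCard y)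
      have hpP : p ∈ PrimesOf C := hP p hpp hpn
      set N := Subgroup.zpowers y with hNdef
      haveI : N.Normal := ⟨fun m hm k => by
        rw [hcomm k m, mul_assoc, mul_inv_cancel, mul_one]; exact hm⟩
      have hcardN : Nat.card N = p := by rw [hNdef, Nat.card_zpowers, hyp]
      rcases eq_or_ne p n with hpeq | hpne
      · exact prime_card_mem C hroot hper hpP G (hcard.trans hpeq.symm)
      · have hplt : p < n := lt_of_le_of_ne (Nat.le_of_dvd hn0 hpn) hpne
        refine key N (hcardN ▸ hplt) ?_ (prime_card_mem C hroot hper hpP N hcardN)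
        have hcardQ : Nat.card (G ⧸ N) * p = n := by
          rw [← hcardN, ← hcard]
          exact (Subgroup.card_eq_card_quotient_mul_card_subgroup N).symm
        nlinarith [hpp.two_le, Nat.card_pos (α := G ⧸ N)]
    · -- nonabelian case
      set N := commutator G with hNdef
      have hne_top : N ≠ ⊤ := by
        intro htop
        have hall : ∀ k, derivedSeries G k = ⊤ := by
          intro k; induction k with
          | zero => rfl
          | succ k ihk => rw [derivedSeries_succ, ihk, ← commutator_def, ← hNdef, htop]
        obtain ⟨k, hk⟩ := hsolv
        rw [hall k] at hk
        exact absurd hk (by simp)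
      have hcardN_dvd : Nat.card N ∣ n := hcard ▸ Subgroup.card_subgroup_dvd_card N
      have hcardN_lt : Nat.card N < n := by
        rcases lt_or_eq_of_le (Nat.le_of_dvd hn0 hcardN_dvd) with h | h
        · exact h
        · exact absurd (Subgroup.eq_top_of_card_eq N (h.trans hcard.symm)) hne_top
      haveI : Nontrivial N := by
        rw [Subgroup.nontrivial_iff_ne_bot]; exact hbot
      have hcardQ_lt : Nat.card (G ⧸ N) < n := by
        have := (Subgroup.card_eq_card_quotient_mul_card_subgroup N).symm
        have h2 : 1 < Nat.card N := Finite.one_lt_card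
        have hq : 0 < Nat.card (G ⧸ N) := Nat.card_pos
        nlinarith
      refine key N hcardN_lt hcardQ_lt ?_
      exact ih _ hcardN_lt N rfl (haveI : Group.IsSolvable G := hsolv; Group.isSolvable_of_isSolvable_injective N.subtype_injective)
        (fun p hp hd => hP p hp (hd.trans hcardN_dvd))

/-- a finite solvable group belongs to a root class `𝒞` of periodic groups iff
its order is a `𝔓(𝒞)`-number. -/
theorem stmt8 (C : GroupClass) (hroot : IsRootClass C) (hper : PeriodicClass C)
    (G : Type) [Group G] [Finite G] (hsolv : IsSolvable G) :
    C G ↔ IsPNat (PrimesOf C) (Nat.card G) := by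
  constructor
  · intro hC p hp hdvd
    haveI : Fact p.Prime := ⟨hp⟩
    obtain ⟨g, hg⟩ := exists_prime_orderOf_dvd_card' p hdvd
    exact ⟨hp, G, inferInstance, hC, g, by rw [hg]⟩
  · intro hP
    exact aux_ind C hroot hper (Nat.card G) G rfl hsolv hP
end

section
/- Let 𝒞 be a root class of groups consisting only of periodic groups and let n ∈ ℤ∖{0}. The group BS(1,n) is conjugacy 𝒞-separable if and only if the following holds: for all u ∈ ℤ≥0 and v,w ∈ ℤ, if for all x,y ∈ ℤ≥0 the integer n^u − 1 does not divide v·n^x − w·n^y, then there exists s ∈ Ξ(n,𝔓(𝒞)) such that for all x,y ∈ ℤ≥0, gcd(n^u − 1, s) does not divide v·n^x − w·n^y. -/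
namespace Stmt11
variable {G : Type*} [Group G]

/-- Pushing rule: `A^z * T^k = T^k * A^(z*n^k)` given the BS relation. -/
lemma relPow {A T : G} {n : ℤ} (h : T⁻¹ * A * T = A ^ n) :
    ∀ (k : ℕ) (z : ℤ), A ^ z * T ^ k = T ^ k * A ^ (z * n ^ k) := by
  have h1 : ∀ z : ℤ, A ^ z * T = T * A ^ (z * n) := by
    intro z
    have h0 : T⁻¹ * A ^ z * (T⁻¹)⁻¹ = (T⁻¹ * A * (T⁻¹)⁻¹) ^ z := conj_zpow.symm
    simp only [inv_inv] at h0
    rw [h, ← zpow_mul, mul_comm n z] at h0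
    have := congrArg (fun x => T * x) h0
    simpa [mul_assoc] using this
  intro k
  induction k with
  | zero => simp
  | succ k ih =>
    intro z
    have : A ^ z * T ^ (k+1) = (A ^ z * T ^ k) * T := by rw [mul_assoc, pow_succ]
    rw [this, ih, mul_assoc, h1, ← mul_assoc, ← pow_succ]
    ring_nf

lemma conj_T_pow {A T : G} {n : ℤ} (h : T⁻¹ * A * T = A ^ n) (u k : ℕ) (v : ℤ) :
    (T ^ k)⁻¹ * (T ^ u * A ^ v) * T ^ k = T ^ u * A ^ (v * n ^ k) := by
  have := relPow h k v
  calc (T ^ k)⁻¹ * (T ^ u * A ^ v) * T ^ k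
      = T ^ u * ((T ^ k)⁻¹ * (A ^ v * T ^ k)) := by
        group
    _ = T ^ u * ((T ^ k)⁻¹ * (T ^ k * A ^ (v * n ^ k))) := by rw [this]
    _ = T ^ u * A ^ (v * n ^ k) := by group

lemma conj_A_pow {A T : G} {n : ℤ} (h : T⁻¹ * A * T = A ^ n) (u : ℕ) (m z : ℤ) :
    (A ^ m)⁻¹ * (T ^ u * A ^ z) * A ^ m = T ^ u * A ^ (z + m * (1 - n ^ u)) := by
  have h2 : A ^ (-m) * T ^ u = T ^ u * A ^ ((-m) * n ^ u) := relPow h u (-m)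
  calc (A ^ m)⁻¹ * (T ^ u * A ^ z) * A ^ m
      = A ^ (-m) * T ^ u * (A ^ z * A ^ m) := by
        rw [← zpow_neg]; group
    _ = T ^ u * A ^ ((-m) * n ^ u) * (A ^ z * A ^ m) := by rw [h2]
    _ = T ^ u * A ^ ((-m) * n ^ u + (z + m)) := by
        rw [mul_assoc, ← zpow_add, ← zpow_add]
    _ = T ^ u * A ^ (z + m * (1 - n ^ u)) := by ring_nf

/-- If `gcd(n^u - 1, s) ∣ v n^x - w n^y` and `A^s = 1` then `T^u A^v ~ T^u A^w`. -/
lemma conj_of_dvd {A T : G} {n : ℤ} (h : T⁻¹ * A * T = A ^ n) (s : ℕ)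
    (hAs : A ^ (s : ℤ) = 1) (u x y : ℕ) (v w : ℤ)
    (hd : (Int.gcd (n ^ u - 1) (s : ℤ) : ℤ) ∣ v * n ^ x - w * n ^ y) :
    IsConj (T ^ u * A ^ v) (T ^ u * A ^ w) := by
  obtain ⟨q, hq⟩ := hd
  set a : ℤ := n ^ u - 1 with ha
  set α := Int.gcdA a (s : ℤ)
  set β := Int.gcdB a (s : ℤ)
  have hbezout : (Int.gcd a (s : ℤ) : ℤ) = a * α + (s : ℤ) * β := Int.gcd_eq_gcd_ab a (s : ℤ)
  have key : v * n ^ x + (α * q) * (1 - n ^ u) = w * n ^ y + (s : ℤ) * (β * q) := by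
    have : v * n ^ x - w * n ^ y = (a * α + (s : ℤ) * β) * q := by rw [← hbezout]; exact hq
    rw [ha] at this; linarith [this]
  have c1 : IsConj (T ^ u * A ^ v) (T ^ u * A ^ (v * n ^ x)) :=
    isConj_iff.2 ⟨(T ^ x)⁻¹, by simpa using conj_T_pow h u x v⟩
  have c2 : IsConj (T ^ u * A ^ (v * n ^ x)) (T ^ u * A ^ (w * n ^ y)) := by
    refine isConj_iff.2 ⟨(A ^ (α * q))⁻¹, ?_⟩
    have := conj_A_pow h u (α * q) (v * n ^ x)
    simp only [inv_inv] at this ⊢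
    rw [this, key, zpow_add]
    have hs1 : A ^ ((s : ℤ) * (β * q)) = 1 := by
      rw [zpow_mul, hAs, one_zpow]
    rw [hs1, mul_one]
  have c3 : IsConj (T ^ u * A ^ (w * n ^ y)) (T ^ u * A ^ w) :=
    (isConj_iff.2 ⟨(T ^ y)⁻¹, by simpa using conj_T_pow h u y w⟩).symm
  exact (c1.trans c2).trans c3

end Stmt11

namespace Stmt11

variable {n : ℤ}

lemma BS_rel (n : ℤ) : (BSt 1 n)⁻¹ * BSa 1 n * BSt 1 n = (BSa 1 n) ^ n := by
  have h : PresentedGroup.mk (BSrels 1 n)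
      ((FreeGroup.of true)⁻¹ * (FreeGroup.of false) ^ (1 : ℤ) * FreeGroup.of true *
        (FreeGroup.of false) ^ (-n)) = 1 := by
    apply (QuotientGroup.eq_one_iff _).2
    exact Subgroup.subset_normalClosure rfl
  rw [map_mul, map_mul, map_mul, map_inv, map_zpow, map_zpow, zpow_one] at h
  have h' : (BSt 1 n)⁻¹ * BSa 1 n * BSt 1 n * (BSa 1 n) ^ (-n) = 1 := h
  rw [zpow_neg] at h'
  exact mul_inv_eq_one.mp h'

section push
variable {G : Type*} [Group G] {A T : G}

lemma relPush_neg (h : T⁻¹ * A * T = A ^ n) (k : ℕ) (z : ℤ) :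
    T ^ (-(k : ℤ)) * A ^ z = A ^ (z * n ^ k) * T ^ (-(k : ℤ)) := by
  have h1 := relPow h k z
  have := congrArg (fun x => (T ^ k)⁻¹ * x * (T ^ k)⁻¹) h1
  simp only [← mul_assoc, inv_mul_cancel_left, one_mul] at this
  simpa [zpow_neg, zpow_natCast, mul_assoc] using this

end push

/-- Every element of `BS(1,n)` has the form `t^p a^z t^q`. -/
lemma BS_normal_form (n : ℤ) (g : BS 1 n) :
    ∃ p z q : ℤ, g = BSt 1 n ^ p * BSa 1 n ^ z * BSt 1 n ^ q := by
  set A := BSa 1 n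
  set T := BSt 1 n
  have hrel : T⁻¹ * A * T = A ^ n := BS_rel n
  let S : Subgroup (BS 1 n) :=
    { carrier := {g | ∃ p z q : ℤ, g = T ^ p * A ^ z * T ^ q}
      one_mem' := ⟨0, 0, 0, by simp⟩
      mul_mem' := by
        rintro a b ⟨p, z, q, rfl⟩ ⟨p', z', q', rfl⟩
        rcases le_or_gt 0 (q + p') with hm | hm
        · -- q + p' ≥ 0
          set k := (q + p').toNat with hk
          have hqp : q + p' = (k : ℤ) := by rw [hk, Int.toNat_of_nonneg hm]
          have hpush : A ^ z * T ^ (k : ℤ) = T ^ (k : ℤ) * A ^ (z * n ^ k) := by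
            simpa [zpow_natCast] using relPow hrel k z
          refine ⟨p + k, z * n ^ k + z', q', ?_⟩
          calc T ^ p * A ^ z * T ^ q * (T ^ p' * A ^ z' * T ^ q')
              = T ^ p * (A ^ z * T ^ (q + p')) * A ^ z' * T ^ q' := by
                rw [zpow_add]; group
            _ = T ^ p * (T ^ (k : ℤ) * A ^ (z * n ^ k)) * A ^ z' * T ^ q' := by
                rw [hqp, hpush]
            _ = T ^ (p + k) * A ^ (z * n ^ k + z') * T ^ q' := by
                rw [zpow_add, zpow_add]; group
        · -- q + p' < 0
          set k := (-(q + p')).toNat with hk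
          have hqp : q + p' = -(k : ℤ) := by
            rw [hk, Int.toNat_of_nonneg (by omega)]; omega
          have hpush : T ^ (-(k : ℤ)) * A ^ z' = A ^ (z' * n ^ k) * T ^ (-(k : ℤ)) :=
            relPush_neg hrel k z'
          refine ⟨p, z + z' * n ^ k, q + p' + q', ?_⟩
          calc T ^ p * A ^ z * T ^ q * (T ^ p' * A ^ z' * T ^ q')
              = T ^ p * A ^ z * (T ^ (q + p') * A ^ z') * T ^ q' := by
                rw [zpow_add]; group
            _ = T ^ p * A ^ z * (A ^ (z' * n ^ k) * T ^ (q + p')) * T ^ q' := by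
                rw [hqp, hpush]
            _ = T ^ p * A ^ (z + z' * n ^ k) * T ^ (q + p' + q') := by
                rw [zpow_add, zpow_add (T) (q+p') q']; group
      inv_mem' := by
        rintro a ⟨p, z, q, rfl⟩
        exact ⟨-q, -z, -p, by simp [zpow_neg]; group⟩ }
  have : g ∈ S := by
    refine PresentedGroup.generated_by (BSrels 1 n) S ?_ g
    intro j
    cases j
    · exact ⟨0, 1, 0, by simp; rfl⟩
    · exact ⟨1, 0, 0, by simp; rfl⟩
  exact this

end Stmt11

namespace Stmt11

/-- Model group: `ℚ × ℤ` with `(c,e)(c',e') = (c + ν^{-e} c', e+e')`. -/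
structure Mdl (ν : ℚˣ) where
  c : ℚ
  e : ℤ

namespace Mdl

variable {ν : ℚˣ}

instance : Mul (Mdl ν) :=
  ⟨fun x y => ⟨x.c + ((ν ^ (-x.e) : ℚˣ) : ℚ) * y.c, x.e + y.e⟩⟩

instance : One (Mdl ν) := ⟨⟨0, 0⟩⟩

instance : Inv (Mdl ν) := ⟨fun x => ⟨-(((ν ^ x.e : ℚˣ) : ℚ) * x.c), -x.e⟩⟩

lemma mul_def (x y : Mdl ν) :
    x * y = ⟨x.c + ((ν ^ (-x.e) : ℚˣ) : ℚ) * y.c, x.e + y.e⟩ := rfl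

lemma one_def : (1 : Mdl ν) = ⟨0, 0⟩ := rfl

lemma inv_def (x : Mdl ν) : x⁻¹ = ⟨-(((ν ^ x.e : ℚˣ) : ℚ) * x.c), -x.e⟩ := rfl

instance : Group (Mdl ν) where
  mul_assoc := by
    rintro ⟨c1, e1⟩ ⟨c2, e2⟩ ⟨c3, e3⟩
    simp only [mul_def, Mdl.mk.injEq]
    constructor
    · simp only [neg_add, zpow_add, Units.val_mul, Units.val_zpow_eq_zpow_val]
      ring
    · ring
  one_mul := by rintro ⟨c, e⟩; simp [mul_def, one_def]
  mul_one := by rintro ⟨c, e⟩; simp [mul_def, one_def]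
  inv_mul_cancel := by
    rintro ⟨c, e⟩
    simp only [mul_def, inv_def, one_def, Mdl.mk.injEq, neg_neg]
    constructor
    · ring
    · ring

lemma a_zpow (z : ℤ) : (⟨1, 0⟩ : Mdl ν) ^ z = ⟨z, 0⟩ := by
  have hp : ∀ k : ℕ, (⟨1, 0⟩ : Mdl ν) ^ k = ⟨k, 0⟩ := by
    intro k
    induction k with
    | zero => simp [one_def]
    | succ k ih => rw [pow_succ, ih, mul_def]; simp
  rcases z with k | k
  · simpa using (zpow_natCast (⟨1, 0⟩ : Mdl ν) k) ▸ hp k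
  · rw [zpow_negSucc, hp, inv_def]
    simp

lemma t_zpow (k : ℤ) : (⟨0, 1⟩ : Mdl ν) ^ k = ⟨0, k⟩ := by
  have hp : ∀ m : ℕ, (⟨0, 1⟩ : Mdl ν) ^ m = ⟨0, m⟩ := by
    intro m
    induction m with
    | zero => simp [one_def]
    | succ m ih => rw [pow_succ, ih, mul_def]; simp
  rcases k with m | m
  · simpa using (zpow_natCast (⟨0, 1⟩ : Mdl ν) m) ▸ hp m
  · rw [zpow_negSucc, hp, inv_def]
    simp [Int.negSucc_eq]

lemma canon (p z q : ℤ) :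
    (⟨0, 1⟩ : Mdl ν) ^ p * (⟨1, 0⟩ : Mdl ν) ^ z * (⟨0, 1⟩ : Mdl ν) ^ q
      = ⟨((ν ^ (-p) : ℚˣ) : ℚ) * z, p + q⟩ := by
  rw [a_zpow, t_zpow, t_zpow, mul_def, mul_def]
  simp

end Mdl

end Stmt11

namespace Stmt11

variable {n : ℤ}

lemma exists_model_hom (hn : n ≠ 0) :
    ∃ (ν : ℚˣ), ((ν : ℚ) = (n : ℚ)) ∧
      ∃ φ : BS 1 n →* Mdl ν, φ (BSa 1 n) = ⟨1, 0⟩ ∧ φ (BSt 1 n) = ⟨0, 1⟩ := by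
  have hn' : (n : ℚ) ≠ 0 := by exact_mod_cast hn
  refine ⟨Units.mk0 (n : ℚ) hn', rfl, ?_⟩
  set ν := Units.mk0 (n : ℚ) hn' with hν
  set f : Bool → Mdl ν := fun b => if b then ⟨0, 1⟩ else ⟨1, 0⟩ with hf
  have hrels : ∀ r ∈ BSrels 1 n, FreeGroup.lift f r = 1 := by
    intro r hr
    rw [BSrels, Set.mem_singleton_iff] at hr
    subst hr
    simp only [map_mul, map_inv, map_zpow, FreeGroup.lift_apply_of, hf]
    simp only [Bool.false_eq_true, if_false, zpow_one, Mdl.a_zpow, Mdl.inv_def, Mdl.mul_def,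
      Mdl.one_def]
    simp [hν]
  refine ⟨PresentedGroup.toGroup hrels, ?_, ?_⟩
  · exact PresentedGroup.toGroup.of hrels (x := false)
  · exact PresentedGroup.toGroup.of hrels (x := true)

end Stmt11

namespace Stmt11

lemma t_pow {ν : ℚˣ} (u : ℕ) : (⟨0, 1⟩ : Mdl ν) ^ u = ⟨0, (u : ℤ)⟩ := by
  rw [← zpow_natCast, Mdl.t_zpow]

lemma crit_mp {n : ℤ} (hn : n ≠ 0) (u : ℕ) (v w : ℤ)
    (hc : IsConj (BSt 1 n ^ u * BSa 1 n ^ v) (BSt 1 n ^ u * BSa 1 n ^ w)) :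
    ∃ x y : ℕ, (n ^ u - 1) ∣ (v * n ^ x - w * n ^ y) := by
  obtain ⟨ν, hν, φ, hφa, hφt⟩ := exists_model_hom hn
  obtain ⟨cjg, hcjg⟩ := isConj_iff.1 hc
  obtain ⟨p, z, q, rfl⟩ := BS_normal_form n cjg
  have h := congrArg φ hcjg
  simp only [map_mul, map_inv, map_pow, map_zpow, hφa, hφt, t_pow,
    Mdl.a_zpow, Mdl.t_zpow, Mdl.mul_def, Mdl.inv_def, Mdl.mk.injEq] at h
  obtain ⟨h1, -⟩ := h
  simp only [add_zero, zero_add, mul_zero, neg_zero, mul_one, Units.val_zpow_eq_zpow_val, hν] at h1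
  set r : ℚ := (n : ℚ) with hr'
  have hr : r ≠ 0 := by simp [hr']; exact_mod_cast hn
  have h2 : (z:ℚ) * (r ^ q * r ^ (u:ℤ)) + (v:ℚ) - (z:ℚ) * r ^ q = (w:ℚ) * (r ^ p * r ^ q) := by
    have ha : r ^ p ≠ 0 := zpow_ne_zero _ hr
    have hb : r ^ q ≠ 0 := zpow_ne_zero _ hr
    have hc' : r ^ (u:ℤ) ≠ 0 := zpow_ne_zero _ hr
    simp only [neg_add, zpow_add₀ hr, zpow_neg] at h1
    field_simp at h1
    have hM : r ^ p * (r ^ p * r ^ p) * r ^ q * (r ^ (u:ℤ) * r ^ (u:ℤ)) ≠ 0 := by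
      positivity
    refine mul_right_cancel₀ hM ?_
    rw [zpow_natCast]
    rw [zpow_natCast] at h1
    linear_combination (r ^ p * (r ^ p * r ^ p) * r ^ q * (r ^ u * r ^ u)) * h1
  -- now derive the divisibility
  set P := p.natAbs with hP
  set Q := q.natAbs with hQ
  set X1 := (p + (P:ℤ)).toNat with hX1'
  set X2 := (q + (Q:ℤ)).toNat with hX2'
  have hX1c : (X1 : ℤ) = p + P := by rw [hX1']; omega
  have hX2c : (X2 : ℤ) = q + Q := by rw [hX2']; omega
  refine ⟨P + Q, X1 + X2, -z * n ^ (X2 + P), ?_⟩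
  have hA : r ^ X1 = r ^ p * r ^ P := by
    rw [← zpow_natCast r X1, hX1c, zpow_add₀ hr, zpow_natCast]
  have hB : r ^ X2 = r ^ q * r ^ Q := by
    rw [← zpow_natCast r X2, hX2c, zpow_add₀ hr, zpow_natCast]
  have hQgoal : (v:ℚ) * r ^ (P + Q) - (w:ℚ) * r ^ (X1 + X2)
      = ((r:ℚ) ^ u - 1) * (-(z:ℚ) * r ^ (X2 + P)) := by
    have hu : (r:ℚ) ^ u = r ^ (u:ℤ) := (zpow_natCast r u).symm
    rw [pow_add, pow_add, pow_add, hA, hB, hu]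
    linear_combination (r ^ P * r ^ Q) * h2
  rw [hr'] at hQgoal
  exact_mod_cast hQgoal

end Stmt11

namespace Stmt11

lemma crit {n : ℤ} (hn : n ≠ 0) (u : ℕ) (v w : ℤ) :
    IsConj (BSt 1 n ^ u * BSa 1 n ^ v) (BSt 1 n ^ u * BSa 1 n ^ w) ↔
      ∃ x y : ℕ, (n ^ u - 1) ∣ (v * n ^ x - w * n ^ y) := by
  constructor
  · exact crit_mp hn u v w
  · rintro ⟨x, y, hd⟩
    apply conj_of_dvd (BS_rel n) 0 (by simp) u x y v w
    rwa [Nat.cast_zero, Int.gcd_zero_right, Int.natAbs_dvd]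

end Stmt11

namespace Stmt11

variable {C : GroupClass}

lemma C_of_subsingleton (hroot : IsRootClass C) (H : Type) [Group H] [Subsingleton H] :
    C H := by
  obtain ⟨G₁, inst, hC, _⟩ := hroot.has_nontrivial
  have hbot : C (⊥ : Subgroup G₁) := hroot.subgroup_closed G₁ ⊥ hC
  refine hroot.iso_closed _ _ ?_ hbot
  exact
    { toFun := fun _ => 1
      invFun := fun _ => 1
      left_inv := fun x => Subsingleton.elim _ _
      right_inv := fun x => Subsingleton.elim _ _
      map_mul' := fun _ _ => (one_mul 1).symm }

lemma C_prod (hroot : IsRootClass C) {X Y : Type} [Group X] [Group Y]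
    (hX : C X) (hY : C Y) : C (X × Y) := by
  set N := (MonoidHom.snd X Y).ker with hN
  have e1 : X ≃* N :=
    { toFun := fun x => ⟨(x, 1), rfl⟩
      invFun := fun k => k.1.1
      left_inv := fun x => rfl
      right_inv := by
        rintro ⟨⟨x, y⟩, hk⟩
        have : y = 1 := hk
        subst this; rfl
      map_mul' := fun x y => by ext <;> simp }
  have hCN : C N := hroot.iso_closed _ _ e1 hX
  have e2 : (X × Y) ⧸ N ≃* Y :=
    QuotientGroup.quotientKerEquivOfSurjective (MonoidHom.snd X Y)
      (fun y => ⟨(1, y), rfl⟩)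
  have hCQ : C ((X × Y) ⧸ N) := hroot.iso_closed _ _ e2.symm hY
  exact hroot.extension_closed (X × Y) N hCN hCQ

lemma PrimesOf_nonempty (hroot : IsRootClass C) (hper : PeriodicClass C) :
    ∃ p : ℕ, p ∈ PrimesOf C := by
  obtain ⟨G₁, inst, hC, hnt⟩ := hroot.has_nontrivial
  obtain ⟨g, hg⟩ := exists_ne (1 : G₁)
  have hfin : IsOfFinOrder g := hper G₁ hC g
  have h1 : orderOf g ≠ 1 := by
    simpa [orderOf_eq_one_iff] using hg
  have h0 : orderOf g ≠ 0 := hfin.orderOf_pos.ne'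
  refine ⟨(orderOf g).minFac, Nat.minFac_prime h1, G₁, inst, hC, g, Nat.minFac_dvd _⟩

lemma C_zmod_prime (hroot : IsRootClass C) (hper : PeriodicClass C) {p : ℕ}
    (hp : p ∈ PrimesOf C) : C (Multiplicative (ZMod p)) := by
  obtain ⟨hp', G, instG, hCG, g, hdvd⟩ := hp
  have hfin : IsOfFinOrder g := hper G hCG g
  have h0 : orderOf g ≠ 0 := hfin.orderOf_pos.ne'
  set h := g ^ (orderOf g / p) with hh
  have horder : orderOf h = p := orderOf_pow_orderOf_div h0 hdvd
  set H := Subgroup.zpowers h with hH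
  have hCH : C H := hroot.subgroup_closed G H hCG
  have hcyc : IsCyclic H := by
    refine ⟨⟨⟨h, Subgroup.mem_zpowers h⟩, ?_⟩⟩
    rintro ⟨x, k, rfl⟩
    exact ⟨k, by ext; simp⟩
  have hcard : Nat.card H = p := by rw [hH, Nat.card_zpowers, horder]
  have := hroot.iso_closed _ _ (zmodCyclicMulEquiv hcyc).symm hCH
  rwa [hcard] at this

lemma C_zmod (hroot : IsRootClass C) (hper : PeriodicClass C) :
    ∀ m : ℕ, 0 < m → IsPNat (PrimesOf C) m → C (Multiplicative (ZMod m)) := by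
  intro m
  induction m using Nat.strong_induction_on with
  | _ m IH =>
    intro hm hPm
    rcases eq_or_lt_of_le (show 1 ≤ m from hm) with h1 | h2
    · have : Subsingleton (ZMod m) := by rw [← h1]; infer_instance
      exact C_of_subsingleton hroot _
    · -- m ≥ 2
      set p := m.minFac with hp'
      have hp : p.Prime := Nat.minFac_prime (by omega)
      have hpP : p ∈ PrimesOf C := hPm p hp (Nat.minFac_dvd m)
      set m' := m / p with hm'
      have hdvd : m' ∣ m := Nat.div_dvd_of_dvd (Nat.minFac_dvd m)
      have hmm : m' * p = m := Nat.div_mul_cancel (Nat.minFac_dvd m)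
      have hm'pos : 0 < m' :=
        Nat.div_pos (Nat.minFac_le (by omega)) hp.pos
      have hm'lt : m' < m := by
        have := hp.two_le
        calc m' = m / p := rfl
          _ < m := Nat.div_lt_self (by omega) (by omega)
      haveI : NeZero m := ⟨by omega⟩
      haveI : NeZero m' := ⟨by omega⟩
      set ψ : Multiplicative (ZMod m) →* Multiplicative (ZMod m') :=
        AddMonoidHom.toMultiplicative (ZMod.castHom hdvd (ZMod m')).toAddMonoidHom with hψ
      have hsurj : Function.Surjective ψ := by
        intro y
        obtain ⟨k, hk⟩ : ∃ k : ℕ, (k : ZMod m') = y.toAdd := ZMod.natCast_zmod_surjective y.toAdd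
        refine ⟨Multiplicative.ofAdd ((k : ZMod m)), ?_⟩
        have : (ZMod.castHom hdvd (ZMod m')) ((k : ZMod m)) = (k : ZMod m') :=
          map_natCast _ k
        simp only [hψ]
        apply Multiplicative.toAdd.injective
        simpa [this] using hk
      set K := ψ.ker with hK
      have hCQ : C (Multiplicative (ZMod m) ⧸ K) := by
        have e2 := QuotientGroup.quotientKerEquivOfSurjective ψ hsurj
        have hCm' : C (Multiplicative (ZMod m')) :=
          IH m' hm'lt hm'pos (fun q hq hqd => hPm q hq (hqd.trans hdvd))
        exact hroot.iso_closed _ _ e2.symm hCm'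
      have hCK : C K := by
        have hcardK : Nat.card K = p := by
          have htot : Nat.card (Multiplicative (ZMod m)) = m := by
            simpa using Nat.card_zmod m
          have hquot : Nat.card (Multiplicative (ZMod m) ⧸ K) = m' := by
            rw [Nat.card_congr (QuotientGroup.quotientKerEquivOfSurjective ψ hsurj).toEquiv]
            simpa using Nat.card_zmod m'
          have hcc := Subgroup.card_eq_card_quotient_mul_card_subgroup K
          rw [htot, hquot] at hcc
          have : m' * Nat.card K = m' * p := by omega
          exact Nat.eq_of_mul_eq_mul_left hm'pos this
        have hcycK : IsCyclic K := inferInstance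
        have e3 : Multiplicative (ZMod p) ≃* K := hcardK ▸ zmodCyclicMulEquiv hcycK
        exact hroot.iso_closed _ _ e3 (C_zmod_prime hroot hper hpP)
      exact hroot.extension_closed _ K hCK hCQ

end Stmt11

namespace Stmt11

/-- Finite model: `ZMod S × ZMod R` with `(c,e)(c',e') = (c + ν^{-e} c', e+e')`. -/
structure Kgp (S R : ℕ) (ν : (ZMod S)ˣ) (hν : ν ^ R = 1) where
  c : ZMod S
  e : ZMod R

namespace Kgp

variable {S R : ℕ} {ν : (ZMod S)ˣ} {hν : ν ^ R = 1} [NeZero R]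

/-- `ν ^ (-e)` as a function of `e : ZMod R`. -/
def f (ν : (ZMod S)ˣ) (R : ℕ) [NeZero R] (e : ZMod R) : (ZMod S)ˣ := ν ^ (-e).val

lemma pow_val_eq (hν : ν ^ R = 1) {a : ℕ} (b : ZMod R) (hab : (a : ZMod R) = b) :
    ν ^ a = ν ^ b.val := by
  have hord : orderOf ν ∣ R := orderOf_dvd_of_pow_eq_one hν
  rw [pow_eq_pow_iff_modEq]
  have hv : a % R = b.val := by rw [← hab, ZMod.val_natCast]
  calc a ≡ a % R [MOD orderOf ν] := ((Nat.mod_modEq a R).symm).of_dvd hord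
    _ = b.val := hv

lemma f_add (hν : ν ^ R = 1) (e e' : ZMod R) :
    f ν R (e + e') = f ν R e * f ν R e' := by
  rw [f, f, f, ← pow_add]
  exact (pow_val_eq hν (-(e + e')) (by push_cast [ZMod.natCast_val, ZMod.cast_id]; ring)).symm

lemma f_zero : f ν R (0 : ZMod R) = 1 := by
  simp [f]

instance : Mul (Kgp S R ν hν) :=
  ⟨fun x y => ⟨x.c + ((f ν R x.e : (ZMod S)ˣ) : ZMod S) * y.c, x.e + y.e⟩⟩

instance : One (Kgp S R ν hν) := ⟨⟨0, 0⟩⟩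

instance : Inv (Kgp S R ν hν) :=
  ⟨fun x => ⟨-(((f ν R (-x.e) : (ZMod S)ˣ) : ZMod S) * x.c), -x.e⟩⟩

lemma mul_def (x y : Kgp S R ν hν) :
    x * y = ⟨x.c + ((f ν R x.e : (ZMod S)ˣ) : ZMod S) * y.c, x.e + y.e⟩ := rfl

lemma one_def : (1 : Kgp S R ν hν) = ⟨0, 0⟩ := rfl

lemma inv_def (x : Kgp S R ν hν) :
    x⁻¹ = ⟨-(((f ν R (-x.e) : (ZMod S)ˣ) : ZMod S) * x.c), -x.e⟩ := rfl

instance group (hν : ν ^ R = 1) : Group (Kgp S R ν hν) where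
  mul_assoc := by
    rintro ⟨c1, e1⟩ ⟨c2, e2⟩ ⟨c3, e3⟩
    simp only [mul_def, Kgp.mk.injEq]
    refine ⟨?_, by ring⟩
    rw [f_add hν]
    push_cast [Units.val_mul]
    ring
  one_mul := by rintro ⟨c, e⟩; simp [mul_def, one_def, f_zero]
  mul_one := by rintro ⟨c, e⟩; simp [mul_def, one_def]
  inv_mul_cancel := by
    rintro ⟨c, e⟩
    simp only [mul_def, inv_def, one_def, Kgp.mk.injEq]
    constructor
    · ring
    · ring

lemma a_zpow (z : ℤ) : (⟨1, 0⟩ : Kgp S R ν hν) ^ z = ⟨(z : ZMod S), 0⟩ := by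
  have hp : ∀ k : ℕ, (⟨1, 0⟩ : Kgp S R ν hν) ^ k = ⟨(k : ZMod S), 0⟩ := by
    intro k
    induction k with
    | zero => simp [one_def]
    | succ k ih => rw [pow_succ, ih, mul_def]; simp [f_zero]; try (push_cast; ring_nf)
  rcases z with k | k
  · simpa using (zpow_natCast (⟨1, 0⟩ : Kgp S R ν hν) k) ▸ hp k
  · rw [zpow_negSucc, hp, inv_def]
    simp [f_zero]
    try (push_cast; ring_nf)

lemma t_zpow (k : ℤ) : (⟨0, 1⟩ : Kgp S R ν hν) ^ k = ⟨0, (k : ZMod R)⟩ := by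
  have hp : ∀ m : ℕ, (⟨0, 1⟩ : Kgp S R ν hν) ^ m = ⟨0, (m : ZMod R)⟩ := by
    intro m
    induction m with
    | zero => simp [one_def]
    | succ m ih => rw [pow_succ, ih, mul_def]; simp; try (push_cast; ring_nf)
  rcases k with m | m
  · simpa using (zpow_natCast (⟨0, 1⟩ : Kgp S R ν hν) m) ▸ hp m
  · rw [zpow_negSucc, hp, inv_def]
    simp
    try (push_cast; ring_nf)

end Kgp

end Stmt11

namespace Stmt11

variable {G : Type*} [Group G]

lemma zpow_natural {T : G} {r : ℕ} (hT : T ^ r = 1) (hr : 0 < r) (m : ℤ) :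
    T ^ m = T ^ ((m % r).toNat) ∧ ((m % (r : ℤ)).toNat : ℤ) ≡ m [ZMOD (r : ℤ)] := by
  have hrz : (0 : ℤ) < r := by exact_mod_cast hr
  have hmod : 0 ≤ m % r := Int.emod_nonneg m (by omega)
  have htn : ((m % (r : ℤ)).toNat : ℤ) = m % r := Int.toNat_of_nonneg hmod
  constructor
  · have : T ^ m = T ^ (r * (m / r) + m % r) := by rw [Int.mul_ediv_add_emod m r] -- careful order
    rw [this, zpow_add, zpow_mul]
    have hTr : T ^ (r : ℤ) = 1 := by rw [zpow_natCast, hT]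
    rw [hTr, one_zpow, one_mul]
    conv_lhs => rw [← htn]
    rw [zpow_natCast]
  · rw [htn]
    exact Int.emod_emod_of_dvd m dvd_rfl

lemma conj_form {A T : G} {n : ℤ} (h : T⁻¹ * A * T = A ^ n)
    (p₁ q₁ q₂ p₂ u : ℕ) (z v : ℤ) :
    (T ^ p₁ * A ^ z * T ^ q₁) * (T ^ u * A ^ v) * (T ^ q₂ * A ^ (-z) * T ^ p₂)
      = T ^ (p₁ + q₁ + u + q₂ + p₂) *
          A ^ (((z * n ^ (q₁ + u) + v) * n ^ q₂ - z) * n ^ p₂) := by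
  have P1 : A ^ z * T ^ (q₁ + u) = T ^ (q₁ + u) * A ^ (z * n ^ (q₁ + u)) := relPow h _ z
  have P2 : A ^ (z * n ^ (q₁ + u) + v) * T ^ q₂
      = T ^ q₂ * A ^ ((z * n ^ (q₁ + u) + v) * n ^ q₂) := relPow h _ _
  have P3 : A ^ ((z * n ^ (q₁ + u) + v) * n ^ q₂ + (-z)) * T ^ p₂
      = T ^ p₂ * A ^ (((z * n ^ (q₁ + u) + v) * n ^ q₂ + (-z)) * n ^ p₂) := relPow h _ _
  calc (T ^ p₁ * A ^ z * T ^ q₁) * (T ^ u * A ^ v) * (T ^ q₂ * A ^ (-z) * T ^ p₂)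
      = T ^ p₁ * ((A ^ z * T ^ (q₁ + u)) * A ^ v * T ^ q₂ * A ^ (-z)) * T ^ p₂ := by
        rw [pow_add]; group
    _ = T ^ p₁ * ((T ^ (q₁ + u) * A ^ (z * n ^ (q₁ + u))) * A ^ v * T ^ q₂ * A ^ (-z)) *
          T ^ p₂ := by rw [P1]
    _ = T ^ p₁ * T ^ (q₁ + u) * ((A ^ (z * n ^ (q₁ + u) + v) * T ^ q₂) * A ^ (-z)) *
          T ^ p₂ := by rw [zpow_add]; group
    _ = T ^ p₁ * T ^ (q₁ + u) * ((T ^ q₂ * A ^ ((z * n ^ (q₁ + u) + v) * n ^ q₂)) * A ^ (-z)) *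
          T ^ p₂ := by rw [P2]
    _ = T ^ p₁ * T ^ (q₁ + u) * T ^ q₂ *
          (A ^ ((z * n ^ (q₁ + u) + v) * n ^ q₂ + (-z)) * T ^ p₂) := by
        rw [zpow_add]; group
    _ = T ^ p₁ * T ^ (q₁ + u) * T ^ q₂ *
          (T ^ p₂ * A ^ (((z * n ^ (q₁ + u) + v) * n ^ q₂ + (-z)) * n ^ p₂)) := by rw [P3]
    _ = T ^ (p₁ + q₁ + u + q₂ + p₂) *
          A ^ (((z * n ^ (q₁ + u) + v) * n ^ q₂ - z) * n ^ p₂) := by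
        rw [pow_add, pow_add, pow_add, pow_add]
        ring_nf
        group

end Stmt11

namespace Stmt11

variable {G : Type*} [Group G]

lemma nonconj_extract {A T : G} {n : ℤ} (h : T⁻¹ * A * T = A ^ n)
    {r s : ℕ} (hr : 0 < r) (hT : T ^ r = 1)
    (hA : ∀ j : ℤ, A ^ j = 1 → (s : ℤ) ∣ j)
    (hgen : ∀ g : G, ∃ z k : ℤ, g = A ^ z * T ^ k)
    (hmod : (s : ℤ) ∣ n ^ r - 1)
    (u : ℕ) (v w : ℤ)
    (hc : IsConj (T ^ u * A ^ v) (T ^ u * A ^ w)) :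
    ∃ x : ℕ, (Int.gcd (n ^ u - 1) (s : ℤ) : ℤ) ∣ v * n ^ x - w := by
  obtain ⟨c, hcc⟩ := isConj_iff.1 hc
  obtain ⟨z₀, k₀, rfl⟩ := hgen c
  set k₁ := ((k₀ % (r : ℤ)).toNat) with hk₁
  set k₂ := (((-k₀) % (r : ℤ)).toNat) with hk₂
  obtain ⟨hT1, hm1⟩ := zpow_natural hT hr k₀
  obtain ⟨hT2, hm2⟩ := zpow_natural hT hr (-k₀)
  have hcinv : (A ^ z₀ * T ^ k₀)⁻¹ = T ^ k₂ * A ^ (-z₀) * T ^ (0 : ℕ) := by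
    rw [mul_inv_rev, ← zpow_neg, hT2, ← zpow_neg]
    simp [hk₂]
  have hcform : A ^ z₀ * T ^ k₀ = T ^ (0 : ℕ) * A ^ z₀ * T ^ k₁ := by
    rw [hT1]; simp [hk₁]
  rw [hcinv, hcform, conj_form h 0 k₁ k₂ 0 u z₀ v] at hcc
  have hrkZ : ((k₁ + k₂ : ℕ) : ℤ) ≡ 0 [ZMOD (r : ℤ)] := by
    push_cast
    calc ((k₁ : ℤ) + k₂) ≡ k₀ + -k₀ [ZMOD (r : ℤ)] := hm1.add hm2
      _ = 0 := by ring
  have hrk : r ∣ (k₁ + k₂) := by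
    have := (Int.modEq_zero_iff_dvd).1 hrkZ
    exact_mod_cast this
  obtain ⟨m', hm'⟩ := hrk
  have hTkk : T ^ (k₁ + k₂) = 1 := by rw [hm', pow_mul, hT, one_pow]
  have h1 : T ^ (0 + k₁ + u + k₂ + 0) = T ^ u := by
    have he : 0 + k₁ + u + k₂ + 0 = u + (k₁ + k₂) := by ring
    rw [he, pow_add, hTkk, mul_one]
  rw [h1] at hcc
  set E := ((z₀ * n ^ (k₁ + u) + v) * n ^ k₂ - z₀) * n ^ (0 : ℕ) with hE
  have h2 : A ^ E = A ^ w := mul_left_cancel hcc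
  have h3 : A ^ (E - w) = 1 := by rw [zpow_sub, h2, mul_inv_cancel]
  have h4 : (s : ℤ) ∣ E - w := hA _ h3
  refine ⟨k₂, ?_⟩
  set d := (Int.gcd (n ^ u - 1) (s : ℤ) : ℤ) with hd
  have dd1 : d ∣ n ^ u - 1 := Int.gcd_dvd_left _ _
  have dd2 : d ∣ (s : ℤ) := Int.gcd_dvd_right _ _
  have hkk : (s : ℤ) ∣ n ^ (k₁ + k₂) - 1 := by
    refine hmod.trans ?_
    rw [hm', pow_mul]
    simpa using sub_dvd_pow_sub_pow (n ^ r) 1 m'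
  have key : v * n ^ k₂ - w
      = (E - w) - z₀ * n ^ u * (n ^ (k₁ + k₂) - 1) - z₀ * (n ^ u - 1) := by
    rw [hE]; ring
  rw [key]
  exact dvd_sub (dvd_sub (dd2.trans h4) ((dd2.trans hkk).mul_left _)) (dd1.mul_left _)

end Stmt11

namespace Stmt11

lemma dir_mp {C : GroupClass} (hper : PeriodicClass C) {n : ℤ} (hn : n ≠ 0)
    (hsep : ConjSep C (BS 1 n)) (u : ℕ) (v w : ℤ)
    (hprem : ∀ x y : ℕ, ¬ (n ^ u - 1) ∣ (v * n ^ x - w * n ^ y)) :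
    ∃ s ∈ Xi n (PrimesOf C), ∀ x y : ℕ,
      ¬ (Int.gcd (n ^ u - 1) s : ℤ) ∣ (v * n ^ x - w * n ^ y) := by
  have hnc : ¬IsConj (BSt 1 n ^ u * BSa 1 n ^ v) (BSt 1 n ^ u * BSa 1 n ^ w) := by
    intro hc
    obtain ⟨x, y, hd⟩ := (crit hn u v w).1 hc
    exact hprem x y hd
  obtain ⟨G, instG, hCG, σ, hsurj, hnconj⟩ := hsep _ _ hnc
  set A := σ (BSa 1 n) with hA
  set T := σ (BSt 1 n) with hT
  have hrel : T⁻¹ * A * T = A ^ n := by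
    have := congrArg σ (BS_rel n)
    simpa [map_mul, map_inv, map_zpow] using this
  set s := orderOf A with hs
  set r := orderOf T with hr
  have hs0 : 0 < s := (hper G hCG A).orderOf_pos
  have hr0 : 0 < r := (hper G hCG T).orderOf_pos
  have hTr : T ^ r = 1 := pow_orderOf_eq_one T
  have hAs : A ^ (s : ℤ) = 1 := by rw [zpow_natCast]; exact pow_orderOf_eq_one A
  have hmod : (s : ℤ) ∣ n ^ r - 1 := by
    have h1 : A ^ (1 : ℤ) * T ^ r = T ^ r * A ^ (1 * n ^ r) := relPow hrel r 1
    rw [hTr, mul_one, one_mul, one_mul] at h1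
    have h2 : A ^ (n ^ r - 1) = 1 := by
      rw [zpow_sub, ← h1, zpow_one]
      simp
    exact orderOf_dvd_iff_zpow_eq_one.mpr h2
  have hσgv : σ (BSt 1 n ^ u * BSa 1 n ^ v) = T ^ u * A ^ v := by
    simp [map_mul, map_pow, map_zpow, hT, hA]
  have hσgw : σ (BSt 1 n ^ u * BSa 1 n ^ w) = T ^ u * A ^ w := by
    simp [map_mul, map_pow, map_zpow, hT, hA]
  refine ⟨(s : ℤ), ⟨by exact_mod_cast hs0, ?_, (r : ℤ), by exact_mod_cast hr0, ?_, ?_⟩, ?_⟩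
  · intro p hp hdvd
    exact ⟨hp, G, instG, hCG, A, by exact_mod_cast hdvd⟩
  · intro p hp hdvd
    exact ⟨hp, G, instG, hCG, T, by exact_mod_cast hdvd⟩
  · have htn : ((r : ℤ)).toNat = r := Int.toNat_natCast r
    rw [htn]
    exact (Int.modEq_iff_dvd).mpr (by simpa [neg_sub] using (dvd_neg.mpr hmod))
  · intro x y hd
    refine hnconj ?_
    rw [hσgv, hσgw]
    exact conj_of_dvd hrel s hAs u x y v w hd

end Stmt11

namespace Stmt11

lemma separate {C : GroupClass} (hroot : IsRootClass C) (hper : PeriodicClass C)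
    {n : ℤ} (hn : n ≠ 0)
    (harith : ∀ (u : ℕ) (v w : ℤ),
        (∀ x y : ℕ, ¬ (n ^ u - 1) ∣ (v * n ^ x - w * n ^ y)) →
        ∃ s ∈ Xi n (PrimesOf C), ∀ x y : ℕ,
          ¬ (Int.gcd (n ^ u - 1) s : ℤ) ∣ (v * n ^ x - w * n ^ y))
    (u : ℕ) (v w : ℤ)
    (hnc : ¬IsConj (BSt 1 n ^ u * BSa 1 n ^ v) (BSt 1 n ^ u * BSa 1 n ^ w)) :
    ∃ (G : Type) (_ : Group G), C G ∧
      ∃ σ : BS 1 n →* G, Function.Surjective σ ∧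
        ¬IsConj (σ (BSt 1 n ^ u * BSa 1 n ^ v)) (σ (BSt 1 n ^ u * BSa 1 n ^ w)) := by
  have hprem : ∀ x y : ℕ, ¬ (n ^ u - 1) ∣ (v * n ^ x - w * n ^ y) := by
    intro x y hd
    exact hnc ((crit hn u v w).2 ⟨x, y, hd⟩)
  obtain ⟨s, ⟨hspos, hsP, rr, hrpos, hrP, hmodeq⟩, hsepa⟩ := harith u v w hprem
  set S := s.toNat with hS
  set R := rr.toNat with hR
  have hScast : (S : ℤ) = s := Int.toNat_of_nonneg hspos.le
  have hRcast : (R : ℤ) = rr := Int.toNat_of_nonneg hrpos.le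
  have hSpos : 0 < S := by omega
  have hRpos : 0 < R := by omega
  haveI : NeZero S := ⟨by omega⟩
  haveI : NeZero R := ⟨by omega⟩
  have hnS : ((n : ZMod S)) ^ R = 1 := by
    have h1 : ((n ^ R : ℤ) : ZMod S) = ((1 : ℤ) : ZMod S) := by
      rw [ZMod.intCast_eq_intCast_iff, hScast]
      exact hmodeq
    push_cast at h1
    exact h1
  set ν : (ZMod S)ˣ := ⟨(n : ZMod S), (n : ZMod S) ^ (R - 1), by
      rw [← pow_succ', Nat.sub_add_cancel hRpos, hnS], by
      rw [← pow_succ, Nat.sub_add_cancel hRpos, hnS]⟩ with hνdef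
  have hν : ν ^ R = 1 := by
    ext
    rw [Units.val_pow_eq_pow_val]
    exact hnS
  have hf1 : ((Kgp.f ν R (-1 : ZMod R) : (ZMod S)ˣ) : ZMod S) = (n : ZMod S) := by
    have h2 : Kgp.f ν R (-1 : ZMod R) = ν ^ ((1 : ZMod R)).val := by
      rw [Kgp.f, neg_neg]
    have h3 : ν ^ (1 : ℕ) = ν ^ ((1 : ZMod R)).val :=
      Kgp.pow_val_eq hν (1 : ZMod R) (by push_cast; ring)
    rw [h2, ← h3, pow_one, hνdef]
  set f : Bool → Kgp S R ν hν := fun b => if b then ⟨0, 1⟩ else ⟨1, 0⟩ with hf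
  have hrels : ∀ rel ∈ BSrels 1 n, FreeGroup.lift f rel = 1 := by
    intro rel hrel
    rw [BSrels, Set.mem_singleton_iff] at hrel
    subst hrel
    simp only [map_mul, map_inv, map_zpow, FreeGroup.lift_apply_of, hf, if_true,
      Bool.false_eq_true, if_false, zpow_one]
    rw [Kgp.a_zpow, Kgp.inv_def, Kgp.mul_def, Kgp.mul_def, Kgp.mul_def, Kgp.one_def]
    simp [hf1, Kgp.f_zero]
  set σ : BS 1 n →* Kgp S R ν hν := PresentedGroup.toGroup hrels with hσ
  have hσa : σ (BSa 1 n) = ⟨1, 0⟩ := PresentedGroup.toGroup.of hrels (x := false)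
  have hσt : σ (BSt 1 n) = ⟨0, 1⟩ := PresentedGroup.toGroup.of hrels (x := true)
  have hsurj : Function.Surjective σ := by
    rintro ⟨c, e⟩
    obtain ⟨zc, rfl⟩ := ZMod.intCast_surjective c
    obtain ⟨ze, rfl⟩ := ZMod.intCast_surjective e
    refine ⟨BSa 1 n ^ zc * BSt 1 n ^ ze, ?_⟩
    rw [map_mul, map_zpow, map_zpow, hσa, hσt, Kgp.a_zpow, Kgp.t_zpow, Kgp.mul_def]
    simp [Kgp.f_zero]
  -- membership in the class
  have hSP : IsPNat (PrimesOf C) S := fun p hp hdvd =>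
    hsP p hp (by rw [← hScast]; exact_mod_cast hdvd)
  have hRP : IsPNat (PrimesOf C) R := fun p hp hdvd =>
    hrP p hp (by rw [← hRcast]; exact_mod_cast hdvd)
  set π : Kgp S R ν hν →* Multiplicative (ZMod R) :=
    { toFun := fun k => Multiplicative.ofAdd k.e
      map_one' := rfl
      map_mul' := fun x y => rfl } with hπ
  have hπsurj : Function.Surjective π := fun y => ⟨⟨0, y.toAdd⟩, rfl⟩
  have e1 : Multiplicative (ZMod S) ≃* π.ker :=
    { toFun := fun x => ⟨⟨x.toAdd, 0⟩, rfl⟩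
      invFun := fun k => Multiplicative.ofAdd k.1.c
      left_inv := fun x => rfl
      right_inv := by
        rintro ⟨⟨c, e⟩, hk⟩
        have he : e = 0 := by simpa [hπ, MonoidHom.mem_ker] using hk
        subst he
        rfl
      map_mul' := fun x y => by
        apply Subtype.ext
        show (⟨(x * y).toAdd, 0⟩ : Kgp S R ν hν)
            = (⟨x.toAdd, 0⟩ : Kgp S R ν hν) * ⟨y.toAdd, 0⟩
        rw [Kgp.mul_def]
        simp [Kgp.f_zero] }
  have hCK : C (Kgp S R ν hν) := by
    refine hroot.extension_closed _ π.ker ?_ ?_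
    · exact hroot.iso_closed _ _ e1 (C_zmod hroot hper S hSpos hSP)
    · exact hroot.iso_closed _ _
        (QuotientGroup.quotientKerEquivOfSurjective π hπsurj).symm
        (C_zmod hroot hper R hRpos hRP)
  refine ⟨Kgp S R ν hν, inferInstance, hCK, σ, hsurj, ?_⟩
  intro hconj
  have hrelK : (⟨0, 1⟩ : Kgp S R ν hν)⁻¹ * ⟨1, 0⟩ * ⟨0, 1⟩ = (⟨1, 0⟩ : Kgp S R ν hν) ^ n := by
    have := congrArg σ (BS_rel n)
    simpa [map_mul, map_inv, map_zpow, hσa, hσt] using this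
  rw [map_mul, map_pow, map_zpow, map_mul, map_pow, map_zpow, hσa, hσt] at hconj
  have hT : (⟨0, 1⟩ : Kgp S R ν hν) ^ R = 1 := by
    rw [← zpow_natCast, Kgp.t_zpow]
    simp [Kgp.one_def]
  have hAj : ∀ j : ℤ, (⟨1, 0⟩ : Kgp S R ν hν) ^ j = 1 → (S : ℤ) ∣ j := by
    intro j hj
    rw [Kgp.a_zpow, Kgp.one_def, Kgp.mk.injEq] at hj
    exact (ZMod.intCast_zmod_eq_zero_iff_dvd j S).mp hj.1
  have hgen : ∀ g : Kgp S R ν hν, ∃ z k : ℤ, g = (⟨1, 0⟩ : Kgp S R ν hν) ^ z * ⟨0, 1⟩ ^ k := by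
    rintro ⟨c, e⟩
    obtain ⟨zc, rfl⟩ := ZMod.intCast_surjective c
    obtain ⟨ze, rfl⟩ := ZMod.intCast_surjective e
    refine ⟨zc, ze, ?_⟩
    rw [Kgp.a_zpow, Kgp.t_zpow, Kgp.mul_def]
    simp [Kgp.f_zero]
  have hmodK : (S : ℤ) ∣ n ^ R - 1 := by
    refine (ZMod.intCast_zmod_eq_zero_iff_dvd _ S).mp ?_
    push_cast
    rw [hnS]
    ring
  obtain ⟨x, hx⟩ := nonconj_extract hrelK hRpos hT hAj hgen hmodK u v w hconj
  refine hsepa x 0 ?_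
  rw [← hScast]
  simpa using hx

end Stmt11

namespace Stmt11

lemma isConj_inv' {G : Type*} [Group G] {a b : G} (h : IsConj a b) : IsConj a⁻¹ b⁻¹ := by
  obtain ⟨c, hc⟩ := isConj_iff.1 h
  exact isConj_iff.2 ⟨c, by rw [← hc]; group⟩

lemma dir_mpr {C : GroupClass} (hroot : IsRootClass C) (hper : PeriodicClass C)
    {n : ℤ} (hn : n ≠ 0)
    (harith : ∀ (u : ℕ) (v w : ℤ),
        (∀ x y : ℕ, ¬ (n ^ u - 1) ∣ (v * n ^ x - w * n ^ y)) →
        ∃ s ∈ Xi n (PrimesOf C), ∀ x y : ℕ,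
          ¬ (Int.gcd (n ^ u - 1) s : ℤ) ∣ (v * n ^ x - w * n ^ y)) :
    ConjSep C (BS 1 n) := by
  intro g h hng
  obtain ⟨p, z, q, rfl⟩ := BS_normal_form n g
  obtain ⟨p', z', q', rfl⟩ := BS_normal_form n h
  set T := BSt 1 n with hT
  set A := BSa 1 n with hA
  by_cases he : p + q = p' + q'
  · rcases le_or_gt 0 (p + q) with hsgn | hsgn
    · -- nonnegative t-exponent
      set u := (p + q).toNat with hu'
      have hu : (u : ℤ) = p + q := Int.toNat_of_nonneg hsgn
      have hg2 : IsConj (T ^ p * A ^ z * T ^ q) (T ^ u * A ^ z) := by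
        refine isConj_iff.2 ⟨T ^ q, ?_⟩
        rw [← zpow_natCast T u, hu]
        group
      have hh2 : IsConj (T ^ p' * A ^ z' * T ^ q') (T ^ u * A ^ z') := by
        refine isConj_iff.2 ⟨T ^ q', ?_⟩
        rw [← zpow_natCast T u, hu, he]
        group
      have hnc2 : ¬IsConj (T ^ u * A ^ z) (T ^ u * A ^ z') := by
        intro hcc
        exact hng ((hg2.trans hcc).trans hh2.symm)
      obtain ⟨G, instG, hCG, σ, hsurj, hns⟩ := separate hroot hper hn harith u z z' hnc2
      refine ⟨G, instG, hCG, σ, hsurj, ?_⟩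
      intro hcc
      exact hns ((σ.map_isConj hg2).symm.trans (hcc.trans (σ.map_isConj hh2)))
    · -- negative t-exponent: pass to inverses
      set u := (-(p + q)).toNat with hu'
      have hu : (u : ℤ) = -(p + q) := Int.toNat_of_nonneg (by omega)
      have hg2 : IsConj (T ^ p * A ^ z * T ^ q)⁻¹ (T ^ u * A ^ (-z)) := by
        refine isConj_iff.2 ⟨T ^ (-p), ?_⟩
        rw [← zpow_natCast T u, hu]
        group
      have hh2 : IsConj (T ^ p' * A ^ z' * T ^ q')⁻¹ (T ^ u * A ^ (-z')) := by
        refine isConj_iff.2 ⟨T ^ (-p'), ?_⟩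
        rw [← zpow_natCast T u, hu, he]
        group
      have hnc2 : ¬IsConj (T ^ u * A ^ (-z)) (T ^ u * A ^ (-z')) := by
        intro hcc
        have h1 : IsConj (T ^ p * A ^ z * T ^ q)⁻¹ (T ^ p' * A ^ z' * T ^ q')⁻¹ :=
          (hg2.trans hcc).trans hh2.symm
        have h2 := isConj_inv' h1
        simpa using hng (by simpa using h2)
      obtain ⟨G, instG, hCG, σ, hsurj, hns⟩ := separate hroot hper hn harith u (-z) (-z') hnc2
      refine ⟨G, instG, hCG, σ, hsurj, ?_⟩
      intro hcc
      have hcc' : IsConj (σ ((T ^ p * A ^ z * T ^ q)⁻¹)) (σ ((T ^ p' * A ^ z' * T ^ q')⁻¹)) := by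
        rw [map_inv, map_inv]
        exact isConj_inv' hcc
      exact hns ((σ.map_isConj hg2).symm.trans (hcc'.trans (σ.map_isConj hh2)))
  · -- different t-exponents: separate via an abelian quotient
    obtain ⟨p₀, hp₀P⟩ := PrimesOf_nonempty hroot hper
    have hp₀ : p₀.Prime := hp₀P.1
    set Δ := (p + q) - (p' + q') with hΔ
    have hΔ0 : Δ ≠ 0 := sub_ne_zero.mpr he
    set N := p₀ ^ Δ.natAbs with hN
    have hNpos : 0 < N := pow_pos hp₀.pos _
    have hNgt : Δ.natAbs < N := Nat.lt_pow_self hp₀.one_lt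
    haveI : NeZero N := ⟨by omega⟩
    set fψ : Bool → Multiplicative (ZMod N) :=
      fun b => if b then Multiplicative.ofAdd (1 : ZMod N) else 1 with hfψ
    have hrelsψ : ∀ rel ∈ BSrels 1 n, FreeGroup.lift fψ rel = 1 := by
      intro rel hrel
      rw [BSrels, Set.mem_singleton_iff] at hrel
      subst hrel
      simp [map_mul, map_inv, map_zpow, FreeGroup.lift_apply_of, hfψ]
    set ψ : BS 1 n →* Multiplicative (ZMod N) := PresentedGroup.toGroup hrelsψ with hψ
    have hψa : ψ A = 1 := PresentedGroup.toGroup.of hrelsψ (x := false)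
    have hψt : ψ T = Multiplicative.ofAdd (1 : ZMod N) :=
      PresentedGroup.toGroup.of hrelsψ (x := true)
    have hval : ∀ k : ℤ, ψ (T ^ k) = Multiplicative.ofAdd ((k : ZMod N)) := by
      intro k
      rw [map_zpow, hψt, ← ofAdd_zsmul]
      congr 1
      rw [zsmul_eq_mul, mul_one]
    have hψsurj : Function.Surjective ψ := by
      intro y
      obtain ⟨k, hk⟩ := ZMod.intCast_surjective y.toAdd
      exact ⟨T ^ k, by rw [hval, hk]; rfl⟩
    have hvg : ψ (T ^ p * A ^ z * T ^ q) = Multiplicative.ofAdd (((p + q : ℤ)) : ZMod N) := by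
      rw [map_mul, map_mul, map_zpow, map_zpow, map_zpow, hψa, one_zpow, mul_one, hψt,
        ← ofAdd_zsmul, ← ofAdd_zsmul, ← ofAdd_add]
      congr 1
      rw [zsmul_eq_mul, zsmul_eq_mul, mul_one, mul_one]
      push_cast
      ring
    have hvh : ψ (T ^ p' * A ^ z' * T ^ q')
        = Multiplicative.ofAdd (((p' + q' : ℤ)) : ZMod N) := by
      rw [map_mul, map_mul, map_zpow, map_zpow, map_zpow, hψa, one_zpow, mul_one, hψt,
        ← ofAdd_zsmul, ← ofAdd_zsmul, ← ofAdd_add]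
      congr 1
      rw [zsmul_eq_mul, zsmul_eq_mul, mul_one, mul_one]
      push_cast
      ring
    have hPN : IsPNat (PrimesOf C) N := by
      intro pp hpp hdvd
      have hpe : pp = p₀ := (Nat.prime_dvd_prime_iff_eq hpp hp₀).mp (hpp.dvd_of_dvd_pow hdvd)
      rwa [hpe]
    refine ⟨Multiplicative (ZMod N), inferInstance, C_zmod hroot hper N hNpos hPN, ψ,
      hψsurj, ?_⟩
    intro hcc
    rw [isConj_iff_eq, hvg, hvh] at hcc
    have hzz : (((p + q : ℤ)) : ZMod N) = (((p' + q' : ℤ)) : ZMod N) := by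
      exact hcc
    rw [ZMod.intCast_eq_intCast_iff] at hzz
    have hdvd : ((N : ℤ)) ∣ (p' + q') - (p + q) := Int.ModEq.dvd hzz
    have hdvd2 : N ∣ Δ.natAbs := by
      have h1 : ((N : ℤ)).natAbs ∣ ((p' + q') - (p + q)).natAbs :=
        Int.natAbs_dvd_natAbs.mpr hdvd
      have h2 : (p' + q') - (p + q) = -Δ := by rw [hΔ]; ring
      rw [h2, Int.natAbs_neg] at h1
      simpa using h1
    have : N ≤ Δ.natAbs := Nat.le_of_dvd (by omega) hdvd2
    omega

end Stmt11

/-- arithmetic criterion for the conjugacy `𝒞`-separability of `BS(1,n)`. -/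
theorem stmt11 (C : GroupClass) (hroot : IsRootClass C) (hper : PeriodicClass C)
    (n : ℤ) (hn : n ≠ 0) :
    ConjSep C (BS 1 n) ↔
      ∀ (u : ℕ) (v w : ℤ),
        (∀ x y : ℕ, ¬ (n ^ u - 1) ∣ (v * n ^ x - w * n ^ y)) →
        ∃ s ∈ Xi n (PrimesOf C), ∀ x y : ℕ,
          ¬ (Int.gcd (n ^ u - 1) s : ℤ) ∣ (v * n ^ x - w * n ^ y) := by
  constructor
  · intro hsep u v w hprem
    exact Stmt11.dir_mp hper hn hsep u v w hprem
  · intro harith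
    exact Stmt11.dir_mpr hroot hper hn harith
end
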